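/- arXiv:1907.10166 — 5 statements merged into one kernel-verified Lean document; each statement's English description precedes it below -/
import Mathlib

section
/- Let G be a group acting coboundedly and acylindrically by isometries on a hyperbolic geodesic metric space S, let s₀ ∈ S, and let |g| denote d(s₀, g s₀). Then there exists a constant K > 0 such that for every elliptic element g ∈ G (i.e. every g with bounded orbits) there exists h ∈ G with |h⁻¹ g^n h| ≤ K for all integers n. -/
/-- A unit-speed geodesic parametrization from `x` to `y`. -/
def IsGeodesicSegment {S : Type*} [MetricSpace S] (f : ℝ → S) (x y : S) : Prop :=
  f 0 = x ∧ f (dist x y) = y ∧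
    ∀ a ∈ Set.Icc (0:ℝ) (dist x y), ∀ b ∈ Set.Icc (0:ℝ) (dist x y), dist (f a) (f b) = |a - b|

/-- A metric space is geodesic if any two points are joined by a geodesic. -/
def GeodesicSpace (S : Type*) [MetricSpace S] : Prop :=
  ∀ x y : S, ∃ f : ℝ → S, IsGeodesicSegment f x y

/-- The Gromov product `(x,y)_z`. -/
noncomputable def GromovProd {S : Type*} [MetricSpace S] (x y z : S) : ℝ :=
  (dist z x + dist z y - dist x y) / 2

/-- Every geodesic triangle is `δ`-thin at each of its vertices. -/
def ThinTriangles (δ : ℝ) (S : Type*) [MetricSpace S] : Prop :=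
  ∀ (A B C : S) (f g : ℝ → S), IsGeodesicSegment f C A → IsGeodesicSegment g C B →
    ∀ t ∈ Set.Icc (0:ℝ) (GromovProd A B C), dist (f t) (g t) ≤ δ

/-- A `δ`-hyperbolic space: geodesic, with all triangles `δ`-thin at the vertices. -/
def DeltaHyperbolic (δ : ℝ) (S : Type*) [MetricSpace S] : Prop :=
  GeodesicSpace S ∧ ThinTriangles δ S

/-- The group `G` acts on `S` by isometries. -/
def IsometricAction (G S : Type*) [Group G] [MulAction G S] [MetricSpace S] : Prop :=
  ∀ g : G, Isometry fun t : S => g • t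

/-- The action of `G` on `S` is cobounded: `S = G · B` for some bounded `B`. -/
def CoboundedAction (G S : Type*) [Group G] [MulAction G S] [MetricSpace S] : Prop :=
  ∃ B : Set S, Bornology.IsBounded B ∧ ∀ t : S, ∃ g : G, ∃ b ∈ B, t = g • b

/-- Bowditch's acylindricity condition for the action of `G` on `S`. -/
def AcylindricalAction (G S : Type*) [Group G] [MulAction G S] [MetricSpace S] : Prop :=
  ∀ ε : ℝ, 0 < ε → ∃ R : ℝ, ∃ N : ℕ, 0 < R ∧ ∀ p q : S, R ≤ dist p q →
    {g : G | dist p (g • p) ≤ ε ∧ dist q (g • q) ≤ ε}.Finite ∧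
    {g : G | dist p (g • p) ≤ ε ∧ dist q (g • q) ≤ ε}.ncard ≤ N

/-- `g` is elliptic: the orbits of `⟨g⟩` are bounded. -/
def IsEllipticElt {G : Type*} (S : Type*) [Group G] [MulAction G S] [MetricSpace S]
    (g : G) : Prop :=
  ∀ s : S, Bornology.IsBounded (Set.range fun n : ℤ => (g ^ n) • s)

/-- `g` is loxodromic: `n ↦ gⁿ • s` is a quasi-isometric embedding of `ℤ`. -/
def IsLoxodromicElt {G : Type*} (S : Type*) [Group G] [MulAction G S] [MetricSpace S]
    (g : G) : Prop :=
  ∃ s : S, ∃ κ ε : ℝ, 1 ≤ κ ∧ 0 ≤ ε ∧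
    ∀ n m : ℤ, |(n : ℝ) - (m : ℝ)| / κ - ε ≤ dist ((g ^ n) • s) ((g ^ m) • s)

lemma geodesic_rev {S : Type*} [MetricSpace S] {f : ℝ → S} {x y : S}
    (hf : IsGeodesicSegment f x y) :
    IsGeodesicSegment (fun s => f (dist x y - s)) y x := by
  obtain ⟨h0, h1, h2⟩ := hf
  refine ⟨by simpa using h1, by simp [dist_comm y x, h0], ?_⟩
  intro a ha b hb
  rw [dist_comm y x] at ha hb
  rw [h2 _ ⟨by linarith [ha.2], by linarith [ha.1]⟩ _ ⟨by linarith [hb.2], by linarith [hb.1]⟩]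
  rw [show dist x y - a - (dist x y - b) = b - a by ring, abs_sub_comm]

lemma center_dist {S : Type*} [MetricSpace S] {δ : ℝ}
    (hhyp : DeltaHyperbolic δ S) (F : ℤ → S)
    (hbdd : ∀ z : S, BddAbove (Set.range fun n : ℤ => dist z (F n)))
    (r : ℝ) (hr : ∀ z : S, r ≤ ⨆ n : ℤ, dist z (F n))
    (x x' : S) (hx : (⨆ n : ℤ, dist x (F n)) < r + 1/2)
    (hx' : (⨆ n : ℤ, dist x' (F n)) < r + 1/2) :
    dist x x' ≤ 2*δ + 1 := by
  obtain ⟨hgeo, hthin⟩ := hhyp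
  set t := dist x x' / 2 with ht
  have ht0 : 0 ≤ t := by positivity
  obtain ⟨f, hf⟩ := hgeo x x'
  have key : ∀ n : ℤ, dist (f t) (F n) ≤ δ + (r + 1/2) - t := by
    intro n
    have hxy : dist x (F n) < r + 1/2 := lt_of_le_of_lt (le_ciSup (hbdd x) n) hx
    have hx'y : dist x' (F n) < r + 1/2 := lt_of_le_of_lt (le_ciSup (hbdd x') n) hx'
    by_cases hcase : t ≤ GromovProd x' (F n) x
    · obtain ⟨φ, hφ⟩ := hgeo x (F n)
      have hthin1 := hthin x' (F n) x f φ hf hφ t ⟨ht0, hcase⟩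
      have hGPle : GromovProd x' (F n) x ≤ dist x (F n) := by
        have h1 := dist_triangle x (F n) x'
        rw [dist_comm (F n) x'] at h1
        unfold GromovProd; linarith
      have htle : t ≤ dist x (F n) := le_trans hcase hGPle
      have hφt : dist (φ t) (F n) = dist x (F n) - t := by
        have h3 := hφ.2.2 t ⟨ht0, htle⟩ (dist x (F n)) ⟨dist_nonneg, le_refl _⟩
        rw [hφ.2.1] at h3
        rw [h3, abs_of_nonpos (by linarith)]; ring
      calc dist (f t) (F n) ≤ dist (f t) (φ t) + dist (φ t) (F n) := dist_triangle _ _ _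
        _ ≤ δ + (dist x (F n) - t) := by rw [hφt]; linarith
        _ ≤ δ + (r + 1/2) - t := by linarith
    · push_neg at hcase
      have hsum : GromovProd x' (F n) x + GromovProd x (F n) x' = dist x x' := by
        unfold GromovProd
        rw [dist_comm x' x]; ring
      have hcase2 : t ≤ GromovProd x (F n) x' := by linarith
      obtain ⟨φ, hφ⟩ := hgeo x' (F n)
      have hrev := geodesic_rev hf
      have hthin1 := hthin x (F n) x' (fun s => f (dist x x' - s)) φ hrev hφ t ⟨ht0, hcase2⟩
      have hmm : f (dist x x' - t) = f t := by rw [show dist x x' - t = t by linarith]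
      simp only [hmm] at hthin1
      have hGPle : GromovProd x (F n) x' ≤ dist x' (F n) := by
        have h1 := dist_triangle x' (F n) x
        rw [dist_comm (F n) x] at h1
        unfold GromovProd; linarith
      have htle : t ≤ dist x' (F n) := le_trans hcase2 hGPle
      have hφt : dist (φ t) (F n) = dist x' (F n) - t := by
        have h3 := hφ.2.2 t ⟨ht0, htle⟩ (dist x' (F n)) ⟨dist_nonneg, le_refl _⟩
        rw [hφ.2.1] at h3
        rw [h3, abs_of_nonpos (by linarith)]; ring
      calc dist (f t) (F n) ≤ dist (f t) (φ t) + dist (φ t) (F n) := dist_triangle _ _ _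
        _ ≤ δ + (dist x' (F n) - t) := by rw [hφt]; linarith
        _ ≤ δ + (r + 1/2) - t := by linarith
  have hρm : (⨆ n : ℤ, dist (f t) (F n)) ≤ δ + (r + 1/2) - t := ciSup_le key
  have h4 := hr (f t)
  linarith

/-- If `G` acts coboundedly and acylindrically on a hyperbolic geodesic
space `S` with basepoint `s₀`, then there is `K > 0` such that every elliptic `g ∈ G`
admits `h ∈ G` with `d(s₀, (h⁻¹ gⁿ h) • s₀) ≤ K` for all integers `n`. -/
theorem elliptic_uniformly_bounded_conjugate {S G : Type*} [MetricSpace S] [Group G]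
    [MulAction G S] (δ : ℝ) (hδ : 0 ≤ δ) (hhyp : DeltaHyperbolic δ S)
    (hiso : IsometricAction G S) (hcob : CoboundedAction G S)
    (hacyl : AcylindricalAction G S) (s₀ : S) :
    ∃ K : ℝ, 0 < K ∧ ∀ g : G, IsEllipticElt S g →
      ∃ h : G, ∀ n : ℤ, dist s₀ ((h⁻¹ * g ^ n * h) • s₀) ≤ K := by
  obtain ⟨B, hBbd, hBcov⟩ := hcob
  obtain ⟨g₀, b₀, hb₀, -⟩ := hBcov s₀
  obtain ⟨C, hC⟩ := Metric.isBounded_iff.mp hBbd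
  have hC0 : 0 ≤ C := le_trans (by simp) (hC hb₀ hb₀)
  set D : ℝ := C + dist b₀ s₀ with hD
  have hD0 : 0 ≤ D := add_nonneg hC0 dist_nonneg
  refine ⟨2*D + 2*δ + 2, by linarith, ?_⟩
  intro g hg
  set F : ℤ → S := fun n => (g ^ n) • s₀ with hF
  obtain ⟨M, hM⟩ := Metric.isBounded_iff.mp (hg s₀)
  have hbdd : ∀ z : S, BddAbove (Set.range fun n : ℤ => dist z (F n)) := by
    intro z
    refine ⟨dist z (F 0) + M, ?_⟩
    rintro _ ⟨n, rfl⟩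
    have h1 : dist (F 0) (F n) ≤ M := hM ⟨0, rfl⟩ ⟨n, rfl⟩
    calc dist z (F n) ≤ dist z (F 0) + dist (F 0) (F n) := dist_triangle _ _ _
      _ ≤ _ := by linarith
  haveI : Nonempty S := ⟨s₀⟩
  have hρ0 : ∀ z : S, (0:ℝ) ≤ ⨆ n : ℤ, dist z (F n) :=
    fun z => le_trans dist_nonneg (le_ciSup (hbdd z) 0)
  set r : ℝ := ⨅ z : S, ⨆ n : ℤ, dist z (F n) with hrdef
  have hbb : BddBelow (Set.range fun z : S => ⨆ n : ℤ, dist z (F n)) :=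
    ⟨0, by rintro _ ⟨z, rfl⟩; exact hρ0 z⟩
  have hrle : ∀ z : S, r ≤ ⨆ n : ℤ, dist z (F n) := fun z => ciInf_le hbb z
  obtain ⟨x, hx⟩ : ∃ z : S, (⨆ n : ℤ, dist z (F n)) < r + 1/2 :=
    exists_lt_of_ciInf_lt (show r < r + 1/2 by linarith)
  have hdist : ∀ n m : ℤ, dist ((g^n) • x) (F m) = dist x (F (-n + m)) := by
    intro n m
    have h1 := (hiso (g ^ (-n))).dist_eq ((g^n) • x) (F m)
    simp only [hF] at h1 ⊢
    rw [← h1, smul_smul, smul_smul, ← zpow_add, ← zpow_add]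
    rw [show (-n + n : ℤ) = 0 by ring, zpow_zero, one_smul]
  have hinv : ∀ n : ℤ, (⨆ m : ℤ, dist ((g^n) • x) (F m)) = ⨆ m : ℤ, dist x (F m) := by
    intro n
    have hrange : (Set.range fun m : ℤ => dist ((g^n) • x) (F m))
        = Set.range fun m : ℤ => dist x (F m) := by
      ext v
      constructor
      · rintro ⟨m, rfl⟩; exact ⟨-n + m, (hdist n m).symm⟩
      · rintro ⟨m, rfl⟩
        refine ⟨n + m, ?_⟩
        show dist ((g^n) • x) (F (n+m)) = dist x (F m)
        rw [hdist n (n+m), show -n + (n+m) = m by ring]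
    rw [← sSup_range, ← sSup_range, hrange]
  have hclose : ∀ n : ℤ, dist x ((g^n) • x) ≤ 2*δ + 1 := fun n =>
    center_dist hhyp F hbdd r hrle x ((g^n) • x) hx (by rw [hinv n]; exact hx)
  obtain ⟨h, b, hb, hxb⟩ := hBcov x
  have hinvx : h⁻¹ • x = b := by rw [hxb, inv_smul_smul]
  have hbs : dist (h⁻¹ • x) s₀ ≤ D := by
    rw [hinvx]
    calc dist b s₀ ≤ dist b b₀ + dist b₀ s₀ := dist_triangle _ _ _
      _ ≤ D := by have := hC hb hb₀; rw [hD]; linarith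
  refine ⟨h, fun n => ?_⟩
  have e1 : dist (h⁻¹ • x) (h⁻¹ • ((g^n) • x)) = dist x ((g^n) • x) :=
    (hiso h⁻¹).dist_eq _ _
  have e2 : dist x (h • s₀) = dist (h⁻¹ • x) s₀ := by
    rw [← (hiso h⁻¹).dist_eq x (h • s₀), inv_smul_smul]
  have e3 : dist (h⁻¹ • ((g^n) • x)) ((h⁻¹ * g^n * h) • s₀) = dist x (h • s₀) := by
    have h1 := (hiso (h⁻¹ * g^n)).dist_eq x (h • s₀)
    simp only [mul_smul] at h1 ⊢
    exact h1
  calc dist s₀ ((h⁻¹ * g^n * h) • s₀)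
      ≤ dist s₀ (h⁻¹ • x) + dist (h⁻¹ • x) (h⁻¹ • ((g^n) • x))
        + dist (h⁻¹ • ((g^n) • x)) ((h⁻¹ * g^n * h) • s₀) := dist_triangle4 _ _ _ _
    _ ≤ D + (2*δ + 1) + D := by
        rw [dist_comm s₀ (h⁻¹ • x), e1, e3, e2]
        have := hclose n
        linarith [hbs]
    _ ≤ 2*D + 2*δ + 2 := by linarith
end

section
/- Let G be a group and H a subgroup of finite index n. Then for any symmetrized subset X of G containing the identity (i.e. X = X⁻¹ and 1 ∈ X), the subgroup generated by H ∩ X^(2n) equals H ∩ ⟨X⟩, where X^(2n) denotes the set of products of 2n elements of X. -/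
open Pointwise

private lemma mem_pow_iff_list {G : Type*} [Group G] {X : Set G} {m : ℕ} {g : G} :
    g ∈ X ^ m ↔ ∃ l : List G, l.length = m ∧ (∀ x ∈ l, x ∈ X) ∧ l.prod = g := by
  rw [Set.mem_pow]
  constructor
  · rintro ⟨f, rfl⟩
    exact ⟨List.ofFn fun i => (f i : G), by simp, by simp, rfl⟩
  · rintro ⟨l, rfl, hl, rfl⟩
    refine ⟨fun i => ⟨l.get i, hl _ (List.get_mem l i)⟩, ?_⟩
    simp [List.ofFn_getElem]

private lemma key_lemma {G : Type*} [Group G] (H : Subgroup G) (n : ℕ)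
    (hn : 0 < n) (hidx : H.index = n) (X : Set G) (hsym : X⁻¹ = X) (hone : (1 : G) ∈ X) :
    ∀ l : List G, (∀ x ∈ l, x ∈ X) → l.prod ∈ H →
      l.prod ∈ Subgroup.closure ((H : Set G) ∩ X ^ (2 * n)) := by
  suffices hsuf : ∀ m (l : List G), l.length = m → (∀ x ∈ l, x ∈ X) → l.prod ∈ H →
      l.prod ∈ Subgroup.closure ((H : Set G) ∩ X ^ (2 * n)) from
    fun l => hsuf l.length l rfl
  intro m
  induction m using Nat.strong_induction_on with
  | _ m ih => ?_
  intro l hm hlX hlH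
  by_cases hlen : m ≤ 2 * n
  · exact Subgroup.subset_closure ⟨hlH,
      Set.pow_subset_pow_right hone hlen (mem_pow_iff_list.2 ⟨l, hm, hlX, rfl⟩)⟩
  push_neg at hlen
  -- pigeonhole on prefixes
  have hfin : Finite (G ⧸ H) := Nat.finite_of_card_ne_zero (by rw [← Subgroup.index_eq_card, hidx]; omega)
  have hfty : Fintype (G ⧸ H) := Fintype.ofFinite _
  have hcard : Fintype.card (G ⧸ H) < Fintype.card (Fin (n + 1)) := by
    rw [← Nat.card_eq_fintype_card, Fintype.card_fin, ← Subgroup.index_eq_card, hidx]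
    exact Nat.lt_succ_self n
  obtain ⟨a, b, hab, heq⟩ := Fintype.exists_ne_map_eq_of_card_lt
    (fun k : Fin (n + 1) => QuotientGroup.mk (s := H) ((l.take k).prod)⁻¹) hcard
  -- wlog a < b
  wlog hlt : (a : ℕ) < (b : ℕ) generalizing a b
  · exact this b a hab.symm heq.symm (by omega)
  set i : ℕ := (a : ℕ)
  set j : ℕ := (b : ℕ)
  have hjn : j ≤ n := Nat.lt_succ_iff.mp b.isLt
  have hin : i ≤ n := le_of_lt (lt_of_lt_of_le hlt hjn)
  have hjl : j ≤ l.length := le_trans hjn (by omega)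
  have hH : (l.take j).prod * ((l.take i).prod)⁻¹ ∈ H := by
    have h0 := QuotientGroup.eq.mp heq
    have h' : (l.take i).prod * ((l.take j).prod)⁻¹ ∈ H := by simpa using h0
    simpa using H.inv_mem h'
  -- h ∈ X ^ (2n)
  have htake : ∀ k : ℕ, (l.take k).prod ∈ X ^ (min k l.length) :=
    fun k => mem_pow_iff_list.2 ⟨l.take k, by simp, fun x hx => hlX x (List.mem_of_mem_take hx), rfl⟩
  have hXpow : (l.take j).prod * ((l.take i).prod)⁻¹ ∈ X ^ (2 * n) := by
    have h1 : (l.take j).prod ∈ X ^ j := by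
      have := htake j; rwa [min_eq_left hjl] at this
    have h2 : ((l.take i).prod)⁻¹ ∈ X ^ i := by
      have := htake i
      rw [min_eq_left (le_trans (le_of_lt hlt) hjl)] at this
      have : ((l.take i).prod)⁻¹ ∈ (X ^ i)⁻¹ := Set.inv_mem_inv.mpr this
      rwa [← inv_pow, hsym] at this
    have : (l.take j).prod * ((l.take i).prod)⁻¹ ∈ X ^ j * X ^ i := Set.mul_mem_mul h1 h2
    rw [← pow_add] at this
    exact Set.pow_subset_pow_right hone (by omega) this
  set h : G := (l.take j).prod * ((l.take i).prod)⁻¹ with hh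
  -- the shortened word
  set l' : List G := l.take i ++ l.drop j with hl'
  have hl'len : l'.length < l.length := by
    simp only [hl', List.length_append, List.length_take, List.length_drop]
    omega
  have hl'X : ∀ x ∈ l', x ∈ X := by
    intro x hx
    rcases List.mem_append.mp hx with hx | hx
    · exact hlX x (List.mem_of_mem_take hx)
    · exact hlX x (List.mem_of_mem_drop hx)
  have hfact : l.prod = h * l'.prod := by
    have hsplit : ∀ k : ℕ, l.prod = (l.take k).prod * (l.drop k).prod := by
      intro k; rw [← List.prod_append, List.take_append_drop]
    rw [hl', List.prod_append, hh]
    rw [hsplit j]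
    group
  have hl'H : l'.prod ∈ H := by
    have : l'.prod = h⁻¹ * l.prod := by rw [hfact]; group
    rw [this]
    exact H.mul_mem (H.inv_mem hH) hlH
  have hl'cl := ih l'.length (hm ▸ hl'len) l' rfl hl'X hl'H
  rw [hfact]
  exact Subgroup.mul_mem _ (Subgroup.subset_closure ⟨hH, hXpow⟩) hl'cl

/-- If `H ≤ G` has finite index `n`, then for every symmetrized subset
`X ⊆ G` containing `1`, the subgroup generated by `H ∩ X^(2n)` equals `H ∩ ⟨X⟩`. -/
theorem closure_inter_pow_eq {G : Type*} [Group G] (H : Subgroup G) (n : ℕ)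
    (hn : 0 < n) (hidx : H.index = n) (X : Set G) (hsym : X⁻¹ = X) (hone : (1 : G) ∈ X) :
    Subgroup.closure ((H : Set G) ∩ X ^ (2 * n)) = H ⊓ Subgroup.closure X := by
  apply le_antisymm
  · rw [Subgroup.closure_le]
    rintro g ⟨hgH, hgX⟩
    refine ⟨hgH, ?_⟩
    obtain ⟨l, hlen, hlX, rfl⟩ := mem_pow_iff_list.1 hgX
    exact Subgroup.list_prod_mem _ fun x hx => Subgroup.subset_closure (hlX x hx)
  · rintro g ⟨hgH, hgX⟩
    have hmono : g ∈ Submonoid.closure X := by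
      have : (Subgroup.closure X).toSubmonoid = Submonoid.closure (X ∪ X⁻¹) :=
        Subgroup.closure_toSubmonoid X
      rw [hsym, Set.union_self] at this
      rw [← this]
      exact hgX
    obtain ⟨l, hlX, hlprod⟩ := Submonoid.exists_list_of_mem_closure hmono
    rw [← hlprod] at hgH ⊢
    exact key_lemma H n hn hidx X hsym hone l hlX hgH
end

section
/- Let H be a subgroup of a free product A ∗ B. If every element of H is conjugate in A ∗ B to an element of B, then H itself is conjugate in A ∗ B to a subgroup of B. -/
set_option autoImplicit false

open Monoid

namespace FreeProdConj

variable {ι : Type*} {M : ι → Type*} [∀ i, Group (M i)]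

/-- adjacent letters have distinct indices -/
abbrev NeIdx : (Σ j, M j) → (Σ j, M j) → Prop := fun p q => p.1 ≠ q.1

/-- reversed, letterwise-inverted list -/
def invRev (l : List (Σ i, M i)) : List (Σ i, M i) :=
  (l.map fun p => ⟨p.1, p.2⁻¹⟩).reverse

@[simp] lemma invRev_nil : invRev ([] : List (Σ i, M i)) = [] := rfl

lemma invRev_cons (p : Σ i, M i) (t : List (Σ i, M i)) :
    invRev (p :: t) = invRev t ++ [⟨p.1, p.2⁻¹⟩] := by
  simp [invRev]

@[simp] lemma invRev_length (l : List (Σ i, M i)) : (invRev l).length = l.length := by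
  simp [invRev]

lemma head?_invRev (l : List (Σ i, M i)) :
    (invRev l).head? = l.getLast?.map fun p => ⟨p.1, p.2⁻¹⟩ := by
  rw [invRev, List.head?_reverse, List.getLast?_map]

lemma getLast?_invRev (l : List (Σ i, M i)) :
    (invRev l).getLast? = l.head?.map fun p => ⟨p.1, p.2⁻¹⟩ := by
  rw [invRev, List.getLast?_reverse, List.head?_map]

lemma chain'_invRev {l : List (Σ i, M i)} (h : l.IsChain NeIdx) :
    (invRev l).IsChain NeIdx := by
  rw [invRev, List.isChain_reverse, List.isChain_map]
  refine List.IsChain.imp ?_ h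
  intro a b hab
  show b.1 ≠ a.1
  have hab' : a.1 ≠ b.1 := hab
  exact fun h' => hab' h'.symm

lemma mem_invRev {p : Σ i, M i} {l : List (Σ i, M i)} (h : p ∈ invRev l) :
    ∃ q ∈ l, p = ⟨q.1, q.2⁻¹⟩ := by
  rw [invRev, List.mem_reverse, List.mem_map] at h
  rcases h with ⟨q, hq, rfl⟩
  exact ⟨q, hq, rfl⟩

/-- product of a list of letters -/
def prodL (l : List (Σ i, M i)) : CoprodI M :=
  (l.map fun p => CoprodI.of p.2).prod

@[simp] lemma prodL_nil : prodL ([] : List (Σ i, M i)) = 1 := rfl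

lemma prodL_cons (p : Σ i, M i) (t : List (Σ i, M i)) :
    prodL (p :: t) = CoprodI.of p.2 * prodL t := by
  simp [prodL]

lemma prodL_append (l₁ l₂ : List (Σ i, M i)) :
    prodL (l₁ ++ l₂) = prodL l₁ * prodL l₂ := by
  simp [prodL]

lemma prodL_invRev (l : List (Σ i, M i)) : prodL (invRev l) = (prodL l)⁻¹ := by
  induction l with
  | nil => simp
  | cons p t ih =>
      rw [invRev_cons, prodL_append, prodL_cons, ih, prodL_cons]
      simp [mul_assoc]

lemma word_prod_eq (w : CoprodI.Word M) : w.prod = prodL w.toList := rfl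

lemma word_prod_injective :
    Function.Injective (CoprodI.Word.prod : CoprodI.Word M → CoprodI M) := by
  classical
  intro w₁ w₂ h
  have : (CoprodI.Word.equiv (M := M)).symm w₁ = (CoprodI.Word.equiv (M := M)).symm w₂ := h
  exact (CoprodI.Word.equiv (M := M)).symm.injective this

/-- the symmetric list `l ++ ⟨i,m⟩ :: invRev l` -/
def symList (i : ι) (l : List (Σ j, M j)) (m : M i) : List (Σ j, M j) :=
  l ++ ⟨i, m⟩ :: invRev l

lemma symList_cons (i : ι) (p : Σ j, M j) (l : List (Σ j, M j)) (m : M i) :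
    symList i (p :: l) m = p :: (symList i l m ++ [⟨p.1, p.2⁻¹⟩]) := by
  simp [symList, invRev_cons]

lemma prodL_symList (i : ι) (l : List (Σ j, M j)) (m : M i) :
    prodL (symList i l m) = prodL l * CoprodI.of m * (prodL l)⁻¹ := by
  simp [symList, prodL_append, prodL_cons, prodL_invRev, mul_assoc]

lemma chain'_symList {i : ι} {l : List (Σ j, M j)} {m : M i}
    (hc : (l ++ [(⟨i, m⟩ : Σ j, M j)]).IsChain NeIdx) :
    (symList i l m).IsChain NeIdx := by
  rw [List.isChain_append] at hc
  obtain ⟨hcl, -, hjunc⟩ := hc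
  rw [symList, List.isChain_append]
  refine ⟨hcl, ?_, ?_⟩
  · rw [List.isChain_cons]
    refine ⟨?_, chain'_invRev hcl⟩
    intro y hy
    rw [head?_invRev] at hy
    rcases Option.map_eq_some_iff.1 hy with ⟨q, hq, rfl⟩
    exact fun hiq => (hjunc q hq (⟨i, m⟩ : Σ j, M j) rfl) (by simpa using hiq.symm)
  · intro p hp q hq
    simp only [List.head?_cons, Option.mem_some_iff] at hq
    subst hq
    exact hjunc p hp ⟨i, m⟩ rfl

lemma ne_one_symList {i : ι} {l : List (Σ j, M j)} {m : M i}
    (hl : ∀ p ∈ l, p.2 ≠ 1) (hm : m ≠ 1) :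
    ∀ p ∈ symList i l m, p.2 ≠ 1 := by
  intro p hp
  rw [symList, List.mem_append, List.mem_cons] at hp
  rcases hp with hp | hp | hp
  · exact hl p hp
  · subst hp; exact hm
  · rcases mem_invRev hp with ⟨q, hq, rfl⟩
    exact inv_ne_one.2 (hl q hq)

/-- Symmetric form predicate: `x` is `1` or has reduced word `symList i l m`. -/
def Sym (i : ι) (x : CoprodI M) : Prop :=
  x = 1 ∨ ∃ (w : CoprodI.Word M) (l : List (Σ j, M j)) (m : M i), m ≠ 1 ∧
    w.toList = symList i l m ∧ w.prod = x

lemma sym_intro {i : ι} {l : List (Σ j, M j)} {m : M i} (hm : m ≠ 1)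
    (hc : (l ++ [(⟨i, m⟩ : Σ j, M j)]).IsChain NeIdx)
    (hl : ∀ p ∈ l, p.2 ≠ 1) :
    Sym i (prodL (symList i l m)) :=
  Or.inr ⟨⟨symList i l m, ne_one_symList hl hm, chain'_symList hc⟩, l, m, hm, rfl, rfl⟩

/-- elimination: a `Sym` element is `1` or `prodL` of a valid symmetric list -/
lemma sym_elim {i : ι} {x : CoprodI M} (hx : Sym i x) :
    x = 1 ∨ ∃ (l : List (Σ j, M j)) (m : M i), m ≠ 1 ∧
      ((l ++ [(⟨i, m⟩ : Σ j, M j)]).IsChain NeIdx) ∧ (∀ p ∈ l, p.2 ≠ 1) ∧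
      prodL (symList i l m) = x := by
  rcases hx with rfl | ⟨w, l, m, hm, hlist, hprod⟩
  · exact Or.inl rfl
  right
  have hchain := w.chain_ne
  have hne := w.ne_one
  rw [hlist] at hchain hne
  refine ⟨l, m, hm, ?_, ?_, by rw [← hlist, ← word_prod_eq, hprod]⟩
  · rw [symList, List.isChain_append] at hchain
    rw [List.isChain_append]
    refine ⟨hchain.1, List.isChain_singleton _, ?_⟩
    intro p hp q hq
    simp only [List.head?_cons, Option.mem_some_iff] at hq ⊢
    subst hq
    exact hchain.2.2 p hp (⟨i, m⟩ : Σ j, M j) rfl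
  · intro p hp
    exact hne p (by rw [symList]; exact List.mem_append_left _ hp)

lemma sym_conj (i : ι) (j : ι) (a : M j) (x : CoprodI M) (hx : Sym i x) :
    Sym i (CoprodI.of a * x * (CoprodI.of a)⁻¹) := by
  classical
  rcases sym_elim hx with rfl | ⟨l, m, hm, hc, hl, hprod⟩
  · left; simp
  subst hprod
  by_cases ha : a = 1
  · subst ha
    simpa using sym_intro hm hc hl
  rcases l with _ | ⟨⟨k, b⟩, t⟩
  · -- x = of m, conjugate is of a * of m * of a⁻¹
    by_cases hji : j = i
    · subst hji
      have h1 : a * m * a⁻¹ ≠ 1 := by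
        intro hh
        apply hm
        have := congrArg (fun z => a⁻¹ * z * a) hh
        simpa [mul_assoc] using this
      have := sym_intro (l := []) h1 (List.isChain_singleton _) (by simp)
      simpa [prodL_symList, mul_assoc] using this
    · have hc' : (([⟨j, a⟩] : List (Σ j, M j)) ++ [(⟨i, m⟩ : Σ j, M j)]).IsChain NeIdx := by
        simp [List.isChain_cons_cons, List.isChain_singleton, hji]
      have := sym_intro (l := [⟨j, a⟩]) hm hc' (by simpa using ha)
      simpa [prodL_symList, prodL_cons, mul_assoc] using this
  · by_cases hjk : j = k
    · subst hjk
      by_cases hab : a * b = 1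
      · -- cancellation: a = b⁻¹
        have hxval : CoprodI.of a * prodL (symList i (⟨j, b⟩ :: t) m) * (CoprodI.of a)⁻¹
            = prodL (symList i t m) := by
          have ha' : CoprodI.of a = (CoprodI.of b : CoprodI M)⁻¹ := by
            rw [eq_inv_iff_mul_eq_one, ← map_mul, hab, map_one]
          rw [symList_cons]
          simp only [prodL_cons, prodL_append, prodL_nil, map_inv, ha']
          group
        rw [hxval]
        exact sym_intro hm (hc.tail) fun p hp => hl p (List.mem_cons_of_mem _ hp)
      · -- merge heads
        have hxval : CoprodI.of a * prodL (symList i (⟨j, b⟩ :: t) m) * (CoprodI.of a)⁻¹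
            = prodL (symList i (⟨j, a * b⟩ :: t) m) := by
          simp only [prodL_symList, prodL_cons, map_mul]
          group
        rw [hxval]
        refine sym_intro hm ?_ ?_
        · rw [List.cons_append, List.isChain_cons] at hc ⊢
          exact hc
        · intro p hp
          rcases List.mem_cons.1 hp with rfl | hp
          · exact hab
          · exact hl p (List.mem_cons_of_mem _ hp)
    · -- prepend new letter
      have hxval : CoprodI.of a * prodL (symList i (⟨k, b⟩ :: t) m) * (CoprodI.of a)⁻¹
          = prodL (symList i (⟨j, a⟩ :: ⟨k, b⟩ :: t) m) := by
        simp only [prodL_symList, prodL_cons]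
        group
      rw [hxval]
      refine sym_intro hm ?_ ?_
      · rw [List.cons_append, List.isChain_cons]
        exact ⟨by simpa using hjk, hc⟩
      · intro p hp
        rcases List.mem_cons.1 hp with rfl | hp
        · exact ha
        · exact hl p hp

lemma sym_of_conj (i : ι) (g : CoprodI M) (m : M i) : Sym i (g * CoprodI.of m * g⁻¹) := by
  induction g using CoprodI.induction_left with
  | one =>
      have := sym_intro (i := i) (l := []) (m := m)
      by_cases hm : m = 1
      · left; simp [hm]
      · simpa [prodL_symList] using sym_intro (i := i) (l := []) hm (List.isChain_singleton _) (by simp)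
  | mul a x ih =>
      have : CoprodI.of a * x * CoprodI.of m * (CoprodI.of a * x)⁻¹
          = CoprodI.of a * (x * CoprodI.of m * x⁻¹) * (CoprodI.of a)⁻¹ := by
        group
      rw [this]
      exact sym_conj _ _ _ _ ih

lemma sym_of_conj' {i : ι} {x : CoprodI M}
    (h : ∃ (g : CoprodI M) (m : M i), g⁻¹ * x * g = CoprodI.of m) : Sym i x := by
  obtain ⟨g, m, hg⟩ := h
  have : x = g * CoprodI.of m * g⁻¹ := by
    rw [← hg]; group
  rw [this]
  exact sym_of_conj i g m


lemma symList_length (i : ι) (l : List (Σ j, M j)) (m : M i) :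
    (symList i l m).length = 2 * l.length + 1 := by
  simp [symList]
  omega

lemma sym_contra {i : ι} {L : List (Σ j, M j)} (hL : L ≠ [])
    (hc : L.IsChain NeIdx) (h1 : ∀ p ∈ L, p.2 ≠ 1) (hsym : Sym i (prodL L)) :
    ∃ (l₂ : List (Σ j, M j)) (m₂ : M i), m₂ ≠ 1 ∧ L = symList i l₂ m₂ := by
  rcases hsym with h' | ⟨w₂, l₂, m₂, hm₂, hlist₂, hprod₂⟩
  · exfalso
    have hw : (⟨L, h1, hc⟩ : CoprodI.Word M) = CoprodI.Word.empty :=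
      word_prod_injective (by rw [word_prod_eq, word_prod_eq]; exact h')
    exact hL (congrArg CoprodI.Word.toList hw)
  · have hw : w₂ = (⟨L, h1, hc⟩ : CoprodI.Word M) :=
      word_prod_injective (by rw [hprod₂, word_prod_eq])
    exact ⟨l₂, m₂, hm₂, by rw [← hlist₂, hw]⟩

lemma key_lemma (i : ι) {x : CoprodI M} {n : M i} (hn : n ≠ 1)
    (hx : Sym i x) (hxn : Sym i (x * CoprodI.of n)) :
    ∃ m : M i, CoprodI.of m = x := by
  classical
  rcases sym_elim hx with rfl | ⟨l, m, hm, hc, hl, hprod⟩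
  · exact ⟨1, by simp⟩
  rcases l with _ | ⟨⟨k, b⟩, t⟩
  · refine ⟨m, ?_⟩
    rw [← hprod, prodL_symList]
    simp
  exfalso
  have hb : b ≠ 1 := hl ⟨k, b⟩ List.mem_cons_self
  -- `x = of b * Q * (of b)⁻¹` where `Q = prodL (symList i t m)`
  have hxval : x = CoprodI.of b * prodL (symList i t m) * (CoprodI.of b)⁻¹ := by
    rw [← hprod, symList_cons]
    simp only [prodL_cons, prodL_append, prodL_nil, map_inv]
    group
  by_cases hki : k = i
  · subst hki
    -- t must be nonempty
    rcases t with _ | ⟨⟨k₁, b₁⟩, t₁⟩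
    · have : NeIdx (⟨k, b⟩ : Σ j, M j) (⟨k, m⟩ : Σ j, M j) := by
        have := hc
        simp only [List.cons_append, List.nil_append, List.isChain_cons_cons] at this
        exact this.1
      exact this rfl
    have hk₁ : k ≠ k₁ := by
      have := hc
      simp only [List.cons_append, List.isChain_cons_cons] at this
      exact this.1
    -- chain for the core list ⟨k,b⟩ :: symList i t m, with t = ⟨k₁,b₁⟩ :: t₁
    have hcore_chain : ((⟨k, b⟩ : Σ j, M j) ::
        symList k (⟨k₁, b₁⟩ :: t₁) m).IsChain NeIdx := by
      rw [List.isChain_cons]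
      constructor
      · intro y hy
        rw [symList, List.cons_append, List.head?_cons, Option.mem_some_iff] at hy
        subst hy
        exact hk₁
      · refine chain'_symList ?_
        have := hc
        rw [List.cons_append, List.isChain_cons] at this
        exact this.2
    have hcore_ne : ∀ p ∈ (⟨k, b⟩ : Σ j, M j) :: symList k (⟨k₁, b₁⟩ :: t₁) m, p.2 ≠ 1 := by
      intro p hp
      rcases List.mem_cons.1 hp with rfl | hp
      · exact hb
      · exact ne_one_symList (fun q hq => hl q (List.mem_cons_of_mem _ hq)) hm p hp
    have hlast_core : ((⟨k, b⟩ : Σ j, M j) :: symList k (⟨k₁, b₁⟩ :: t₁) m).getLast?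
        = some ⟨k₁, b₁⁻¹⟩ := by
      rw [symList_cons]
      show ((⟨k, b⟩ : Σ j, M j) :: ((⟨k₁, b₁⟩ : Σ j, M j) :: (symList k t₁ m ++ [(⟨k₁, b₁⁻¹⟩ : Σ j, M j)]))).getLast? = _
      rw [List.getLast?_cons_cons]
      show ((⟨k₁, b₁⟩ : Σ j, M j) :: symList k t₁ m ++ [(⟨k₁, b₁⁻¹⟩ : Σ j, M j)]).getLast? = _
      rw [List.getLast?_concat]
    by_cases hbn : b⁻¹ * n = 1
    · -- cancellation: even length word, parity contradiction
      have hprodL : prodL ((⟨k, b⟩ : Σ j, M j) :: symList k (⟨k₁, b₁⟩ :: t₁) m)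
          = x * CoprodI.of n := by
        rw [prodL_cons, hxval]
        have : (CoprodI.of b : CoprodI M)⁻¹ * CoprodI.of n = 1 := by
          rw [← map_inv, ← map_mul, hbn, map_one]
        calc CoprodI.of b * prodL (symList k (⟨k₁, b₁⟩ :: t₁) m)
            = CoprodI.of b * prodL (symList k (⟨k₁, b₁⟩ :: t₁) m) *
              ((CoprodI.of b)⁻¹ * CoprodI.of n) := by rw [this, mul_one]
          _ = _ := by group
      obtain ⟨l₂, m₂, hm₂, hEq⟩ := sym_contra (by simp) hcore_chain hcore_ne
        (by rw [hprodL]; exact hxn)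
      have := congrArg List.length hEq
      rw [symList_length] at this
      simp [symList_length] at this
      omega
    · -- merged letter at the end
      set L : List (Σ j, M j) :=
        ((⟨k, b⟩ : Σ j, M j) :: symList k (⟨k₁, b₁⟩ :: t₁) m) ++ [(⟨k, b⁻¹ * n⟩ : Σ j, M j)]
        with hLdef
      have hchainL : L.IsChain NeIdx := by
        rw [hLdef, List.isChain_append]
        refine ⟨hcore_chain, List.isChain_singleton _, ?_⟩
        intro p hp q hq
        rw [hlast_core, Option.mem_some_iff] at hp
        simp only [List.head?_cons, Option.mem_some_iff] at hq
        subst hp; subst hq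
        exact fun h => hk₁ h.symm
      have hneL : ∀ p ∈ L, p.2 ≠ 1 := by
        intro p hp
        rw [hLdef, List.mem_append] at hp
        rcases hp with hp | hp
        · exact hcore_ne p hp
        · simp only [List.mem_singleton] at hp
          subst hp
          exact hbn
      have hprodL : prodL L = x * CoprodI.of n := by
        rw [hLdef, prodL_append, prodL_cons, prodL_cons, prodL_nil, hxval]
        rw [map_mul, map_inv]
        group
      obtain ⟨l₂, m₂, hm₂, hEq⟩ := sym_contra (by simp [hLdef]) hchainL hneL
        (by rw [hprodL]; exact hxn)
      -- l₂ is nonempty by length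
      rcases l₂ with _ | ⟨p₂, t₂⟩
      · have := congrArg List.length hEq
        rw [symList_length] at this
        simp [hLdef, symList_length] at this
      -- compare heads and last letters
      have hhead : (⟨k, b⟩ : Σ j, M j) = p₂ := by
        have := congrArg List.head? hEq
        rw [hLdef] at this
        simp only [List.cons_append, List.head?_cons] at this
        rw [symList, List.cons_append, List.head?_cons] at this
        exact Option.some.inj this
      have hlastL : L.getLast? = some ⟨k, b⁻¹ * n⟩ := by
        rw [hLdef, List.getLast?_concat]
      have hlastR : (symList k (p₂ :: t₂) m₂).getLast? = some ⟨p₂.1, p₂.2⁻¹⟩ := by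
        rw [symList_cons]
        show ((p₂ : Σ j, M j) :: (symList k t₂ m₂ ++ [(⟨p₂.1, p₂.2⁻¹⟩ : Σ j, M j)])).getLast? = _
        rw [← List.cons_append, List.getLast?_concat]
      have hlast : (⟨k, b⁻¹ * n⟩ : Σ j, M j) = ⟨p₂.1, p₂.2⁻¹⟩ := by
        have := congrArg List.getLast? hEq
        rw [hlastL, hlastR] at this
        exact Option.some.inj this
      rw [← hhead] at hlast
      injection hlast with h1 h2
      have h2' : b⁻¹ * n = b⁻¹ := h2
      exact hn (mul_left_cancel (h2'.trans (mul_one b⁻¹).symm))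
  · -- k ≠ i : append new letter, parity contradiction
    set L : List (Σ j, M j) := symList i (⟨k, b⟩ :: t) m ++ [(⟨i, n⟩ : Σ j, M j)] with hLdef
    have hlast_sym : (symList i (⟨k, b⟩ :: t) m).getLast? = some ⟨k, b⁻¹⟩ := by
      rw [symList_cons]
      show ((⟨k, b⟩ : Σ j, M j) :: (symList i t m ++ [(⟨k, b⁻¹⟩ : Σ j, M j)])).getLast? = _
      rw [← List.cons_append, List.getLast?_concat]
    have hchainL : L.IsChain NeIdx := by
      rw [hLdef, List.isChain_append]
      refine ⟨chain'_symList hc, List.isChain_singleton _, ?_⟩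
      intro p hp q hq
      rw [hlast_sym, Option.mem_some_iff] at hp
      simp only [List.head?_cons, Option.mem_some_iff] at hq
      subst hp; subst hq
      exact hki
    have hneL : ∀ p ∈ L, p.2 ≠ 1 := by
      intro p hp
      rw [hLdef, List.mem_append] at hp
      rcases hp with hp | hp
      · exact ne_one_symList hl hm p hp
      · simp only [List.mem_singleton] at hp
        subst hp
        exact hn
    have hprodL : prodL L = x * CoprodI.of n := by
      rw [hLdef, prodL_append, hprod, prodL_cons, prodL_nil, mul_one]
    obtain ⟨l₂, m₂, hm₂, hEq⟩ := sym_contra (by simp [hLdef, symList]) hchainL hneL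
      (by rw [hprodL]; exact hxn)
    have := congrArg List.length hEq
    rw [symList_length] at this
    simp [hLdef, symList_length] at this
    omega

lemma coprodI_main (i : ι) (H : Subgroup (CoprodI M))
    (h : ∀ x ∈ H, ∃ (g : CoprodI M) (m : M i), g⁻¹ * x * g = CoprodI.of m) :
    ∃ g : CoprodI M, ∀ x ∈ H, ∃ m : M i, g⁻¹ * x * g = CoprodI.of m := by
  by_cases hH : ∀ x ∈ H, x = 1
  · exact ⟨1, fun x hx => ⟨1, by simp [hH x hx]⟩⟩
  push_neg at hH
  obtain ⟨h₁, h₁H, h₁ne⟩ := hH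
  obtain ⟨g, b₁, hg⟩ := h h₁ h₁H
  have hb₁ : b₁ ≠ 1 := by
    intro hb
    apply h₁ne
    rw [hb, map_one] at hg
    have := congrArg (fun z => g * z * g⁻¹) hg
    simpa [mul_assoc] using this
  refine ⟨g, fun x hx => ?_⟩
  have hy : Sym i (g⁻¹ * x * g) := by
    obtain ⟨g', m, hg'⟩ := h x hx
    refine sym_of_conj' ⟨g⁻¹ * g', m, ?_⟩
    rw [← hg']
    group
  have hyn : Sym i ((g⁻¹ * x * g) * CoprodI.of b₁) := by
    have hval : (g⁻¹ * x * g) * CoprodI.of b₁ = g⁻¹ * (x * h₁) * g := by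
      rw [← hg]
      group
    rw [hval]
    obtain ⟨g', m, hg'⟩ := h (x * h₁) (H.mul_mem hx h₁H)
    refine sym_of_conj' ⟨g⁻¹ * g', m, ?_⟩
    rw [← hg']
    group
  obtain ⟨m, hm⟩ := key_lemma i hb₁ hy hyn
  exact ⟨m, hm.symm⟩

end FreeProdConj

section Transfer

universe u v
variable (A : Type u) (B : Type v) [Group A] [Group B]

/-- index family for the binary free product -/
def FreeProdConj.Fam : Bool → Type (max u v) :=
  fun b => cond b (ULift.{u} B) (ULift.{v} A)

namespace FreeProdConj

instance : ∀ b, Group (Fam A B b)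
  | false => inferInstanceAs (Group (ULift.{v} A))
  | true => inferInstanceAs (Group (ULift.{u} B))

/-- the forward map -/
def toI : Coprod A B →* CoprodI (Fam A B) :=
  Coprod.lift
    ((CoprodI.of (M := Fam A B) (i := false)).comp
      (MulEquiv.ulift (α := A)).symm.toMonoidHom)
    ((CoprodI.of (M := Fam A B) (i := true)).comp
      (MulEquiv.ulift (α := B)).symm.toMonoidHom)

/-- the backward map -/
def ofI : CoprodI (Fam A B) →* Coprod A B :=
  CoprodI.lift fun b =>
    match b with
    | false => Coprod.inl.comp (MulEquiv.ulift (α := A)).toMonoidHom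
    | true => Coprod.inr.comp (MulEquiv.ulift (α := B)).toMonoidHom

lemma toI_inl (a : A) : toI A B (Coprod.inl a) = CoprodI.of (M := Fam A B) (i := false) ⟨a⟩ := by
  simp [toI]
  rfl

lemma toI_inr (b : B) : toI A B (Coprod.inr b) = CoprodI.of (M := Fam A B) (i := true) ⟨b⟩ := by
  simp [toI]
  rfl

lemma ofI_of_false (a : Fam A B false) : ofI A B (CoprodI.of a) = Coprod.inl a.down := by
  simp [ofI]
  rfl

lemma ofI_of_true (b : Fam A B true) : ofI A B (CoprodI.of b) = Coprod.inr b.down := by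
  simp [ofI]
  rfl

/-- the equivalence -/
noncomputable def equivI : Coprod A B ≃* CoprodI (Fam A B) :=
  MonoidHom.toMulEquiv (toI A B) (ofI A B)
    (by
      apply Coprod.hom_ext <;> ext x <;>
        simp [toI_inl, toI_inr, ofI_of_false, ofI_of_true]
      · exact ofI_of_false A B ⟨x⟩
      · exact ofI_of_true A B ⟨x⟩)
    (by
      apply CoprodI.ext_hom
      intro b
      ext x
      cases b
      · simp only [MonoidHom.comp_apply, MonoidHom.id_apply, ofI_of_false, toI_inl]
        rfl
      · simp only [MonoidHom.comp_apply, MonoidHom.id_apply, ofI_of_true, toI_inr]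
        rfl)

end FreeProdConj

end Transfer

/-- Let `H` be a subgroup of a free product `A ∗ B`. If every element of `H`
is conjugate (in `A ∗ B`) to an element of `B`, then `H` is conjugate to a subgroup of `B`. -/
theorem subgroup_conjugate_into_factor {A B : Type*} [Group A] [Group B]
    (H : Subgroup (Monoid.Coprod A B))
    (h : ∀ x ∈ H, ∃ g : Monoid.Coprod A B, ∃ b : B, g⁻¹ * x * g = Monoid.Coprod.inr b) :
    ∃ g : Monoid.Coprod A B, ∀ x ∈ H, ∃ b : B, g⁻¹ * x * g = Monoid.Coprod.inr b := by
  classical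
  set e := FreeProdConj.equivI A B with he
  set H' := H.map e.toMonoidHom with hH'
  have h' : ∀ y ∈ H', ∃ (g : Monoid.CoprodI (FreeProdConj.Fam A B))
      (m : FreeProdConj.Fam A B true), g⁻¹ * y * g = Monoid.CoprodI.of m := by
    intro y hy
    obtain ⟨x, hx, rfl⟩ := Subgroup.mem_map.mp hy
    obtain ⟨g, b, hg⟩ := h x hx
    refine ⟨e g, ⟨b⟩, ?_⟩
    have h2 : e (g⁻¹ * x * g) = e (Monoid.Coprod.inr b) := congrArg e hg
    rw [map_mul, map_mul, map_inv] at h2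
    exact h2.trans (FreeProdConj.toI_inr A B b)
  obtain ⟨g', hg'⟩ := FreeProdConj.coprodI_main true H' h'
  refine ⟨e.symm g', fun x hx => ?_⟩
  obtain ⟨m, hm⟩ := hg' (e x) (Subgroup.mem_map.mpr ⟨x, hx, rfl⟩)
  refine ⟨m.down, ?_⟩
  apply e.injective
  rw [map_mul, map_mul, map_inv, e.apply_symm_apply]
  rw [hm]
  exact (FreeProdConj.toI_inr A B m.down).symm
end

section
/- Let G be a group acting acylindrically on a hyperbolic space S, and let E be an infinite subgroup of G all of whose elements act elliptically on S. Then every element of the normalizer N_G(E) also acts elliptically on S. -/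
section Tools

variable {S G : Type*} [MetricSpace S] [Group G] [MulAction G S] {δ : ℝ}

lemma iso_dist (hiso : IsometricAction G S) (g : G) (a b : S) :
    dist (g • a) (g • b) = dist a b := (hiso g).dist_eq a b

lemma iso_dist' (hiso : IsometricAction G S) (g : G) (a b : S) :
    dist a (g • b) = dist (g⁻¹ • a) b := by
  rw [← iso_dist hiso g⁻¹ a (g • b), inv_smul_smul]

lemma iso_dist'' (hiso : IsometricAction G S) (g : G) (a b : S) :
    dist a (g⁻¹ • b) = dist (g • a) b := by
  rw [← iso_dist hiso g a (g⁻¹ • b), smul_inv_smul]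

lemma gp_nonneg (x y z : S) : 0 ≤ GromovProd x y z := by
  have h := dist_triangle x z y
  unfold GromovProd
  rw [dist_comm x z] at h
  linarith

lemma gp_le_left (x y z : S) : GromovProd x y z ≤ dist z x := by
  have h := dist_triangle z x y
  unfold GromovProd
  rw [dist_comm z x] at h ⊢
  linarith

lemma gp_le_right (x y z : S) : GromovProd x y z ≤ dist z y := by
  have h := dist_triangle z y x
  rw [dist_comm y x] at h
  unfold GromovProd
  linarith

lemma gp_comm (x y z : S) : GromovProd x y z = GromovProd y x z := by
  unfold GromovProd
  rw [dist_comm x y]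
  ring

lemma gp_add (a b c : S) : GromovProd a b c + GromovProd a c b = dist b c := by
  unfold GromovProd
  rw [dist_comm c a, dist_comm c b, dist_comm b a]
  ring

lemma gp_smul (hiso : IsometricAction G S) (g : G) (x y z : S) :
    GromovProd (g • x) (g • y) (g • z) = GromovProd x y z := by
  unfold GromovProd
  rw [iso_dist hiso, iso_dist hiso, iso_dist hiso]

lemma gp_expand (x y z : S) :
    dist x y = dist z x + dist z y - 2 * GromovProd x y z := by
  unfold GromovProd; ring

/-- Four point inequality derived from thin triangles. -/
lemma four_point (hhyp : DeltaHyperbolic δ S) :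
    ∀ w x y z : S, min (GromovProd x z w) (GromovProd z y w) - δ ≤ GromovProd x y w := by
  intro w x y z
  obtain ⟨f, hf⟩ := hhyp.1 w x
  obtain ⟨h, hh⟩ := hhyp.1 w z
  obtain ⟨k, hk⟩ := hhyp.1 w y
  set t := min (GromovProd x z w) (GromovProd z y w) with ht
  have ht0 : 0 ≤ t := le_min (gp_nonneg _ _ _) (gp_nonneg _ _ _)
  have h1 : dist (f t) (h t) ≤ δ := hhyp.2 x z w f h hf hh t ⟨ht0, min_le_left _ _⟩
  have h2 : dist (h t) (k t) ≤ δ := hhyp.2 z y w h k hh hk t ⟨ht0, min_le_right _ _⟩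
  have htx : t ≤ dist w x := le_trans (min_le_left _ _) (gp_le_left _ _ _)
  have hty : t ≤ dist w y := le_trans (min_le_right _ _) (gp_le_right _ _ _)
  have dxf : dist (f t) x = dist w x - t := by
    have h3 := hf.2.2 t ⟨ht0, htx⟩ (dist w x) ⟨dist_nonneg, le_refl _⟩
    rw [hf.2.1] at h3
    rw [h3, abs_of_nonpos (by linarith)]
    ring
  have dyk : dist (k t) y = dist w y - t := by
    have h3 := hk.2.2 t ⟨ht0, hty⟩ (dist w y) ⟨dist_nonneg, le_refl _⟩
    rw [hk.2.1] at h3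
    rw [h3, abs_of_nonpos (by linarith)]
    ring
  have tri1 : dist x y ≤ dist x (f t) + dist (f t) (h t) + dist (h t) (k t) + dist (k t) y := by
    calc dist x y ≤ dist x (h t) + dist (h t) (k t) + dist (k t) y := dist_triangle4 x (h t) (k t) y
    _ ≤ (dist x (f t) + dist (f t) (h t)) + dist (h t) (k t) + dist (k t) y := by
        have := dist_triangle x (f t) (h t); linarith
  rw [dist_comm x (f t)] at tri1
  unfold GromovProd
  rw [dist_comm w x] at htx dxf ⊢
  rw [dist_comm w y] at hty dyk ⊢
  linarith

/-- An elliptic element is "doubled-back" at every point. -/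
lemma elliptic_bound (hiso : IsometricAction G S) (hδ : 0 ≤ δ)
    (hfp : ∀ w x y z : S, min (GromovProd x z w) (GromovProd z y w) - δ ≤ GromovProd x y w)
    {h : G} (hel : IsEllipticElt S h) (y : S) :
    dist y (h • y) ≤ 2 * GromovProd (h • y) (h⁻¹ • y) y + 2 * δ := by
  by_contra hcon
  push_neg at hcon
  set K := GromovProd (h • y) (h⁻¹ • y) y with hKdef
  set L := dist y (h • y) with hLdef
  have hK0 : 0 ≤ K := gp_nonneg _ _ _
  set u : ℕ → S := fun n => h ^ n • y with hu
  have hL : ∀ n : ℕ, dist (u n) (u (n + 1)) = L := by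
    intro n
    show dist (h ^ n • y) (h ^ (n + 1) • y) = L
    rw [pow_succ, mul_smul]
    exact iso_dist hiso _ _ _
  have hK : ∀ n : ℕ, GromovProd (u n) (u (n + 2)) (u (n + 1)) = K := by
    intro n
    show GromovProd (h ^ n • y) (h ^ (n + 2) • y) (h ^ (n + 1) • y) = K
    have e1 : h ^ n = h ^ (n + 1) * h⁻¹ := by group
    have e2 : h ^ (n + 2) = h ^ (n + 1) * h := by group
    rw [e1, e2, mul_smul, mul_smul]
    rw [show h ^ (n+1) • y = h ^ (n+1) • ((1:G) • y) by rw [one_smul]]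
    rw [gp_smul hiso, one_smul, hKdef, gp_comm]
  set A : ℕ → ℝ := fun n => GromovProd (u 0) (u (n + 1)) (u n) with hA
  have hA0 : A 0 = 0 := by
    show GromovProd (u 0) (u 1) (u 0) = 0
    have : u 0 = y := by simp [hu]
    unfold GromovProd
    rw [this]
    simp
  have hId : ∀ n : ℕ, dist (u 0) (u (n + 1)) = dist (u 0) (u n) + L - 2 * A n := by
    intro n
    have h1 : A n = (dist (u 0) (u n) + L - dist (u 0) (u (n + 1))) / 2 := by
      show GromovProd (u 0) (u (n+1)) (u n) = _
      unfold GromovProd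
      rw [dist_comm (u n) (u 0), hL n]
    linarith
  have hAall : ∀ n : ℕ, A n ≤ K + δ := by
    intro n
    induction n with
    | zero => rw [hA0]; linarith
    | succ n ih =>
      have h1 : GromovProd (u 0) (u n) (u (n + 1)) = L - A n := by
        have h2 := gp_add (u 0) (u n) (u (n + 1))
        rw [hL n] at h2
        linarith
      have h2 := hfp (u (n + 1)) (u n) (u (n + 2)) (u 0)
      rw [hK n] at h2
      rw [gp_comm (u n) (u 0)] at h2
      rw [h1] at h2
      have hA2 : GromovProd (u 0) (u (n + 2)) (u (n + 1)) = A (n + 1) := rfl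
      rw [hA2] at h2
      by_contra hcon2
      push_neg at hcon2
      have h3 : K + δ < min (L - A n) (A (n + 1)) := lt_min (by linarith) hcon2
      linarith
  have hGrow : ∀ n : ℕ, (n : ℝ) * (L - 2 * K - 2 * δ) ≤ dist (u 0) (u n) := by
    intro n
    induction n with
    | zero => simp
    | succ n ih =>
      have h1 := hId n
      have h2 := hAall n
      push_cast
      linarith
  obtain ⟨Cb, hCb⟩ := Metric.isBounded_iff.mp (hel y)
  have hmem : ∀ n : ℕ, u n ∈ Set.range (fun k : ℤ => h ^ k • y) := by
    intro n
    exact ⟨(n : ℤ), by simp [hu, zpow_natCast]⟩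
  have hdb : ∀ n : ℕ, dist (u 0) (u n) ≤ Cb := fun n => hCb (hmem 0) (hmem n)
  have hσ : 0 < L - 2 * K - 2 * δ := by linarith
  obtain ⟨n, hn⟩ := exists_nat_gt (Cb / (L - 2 * K - 2 * δ))
  have h4 : Cb < (n : ℝ) * (L - 2 * K - 2 * δ) := by
    rwa [div_lt_iff₀ hσ] at hn
  have h5 := hGrow n
  have h6 := hdb n
  linarith

end Tools

section Tools2

variable {S G : Type*} [MetricSpace S] [Group G] [MulAction G S] {δ : ℝ}

lemma geo_reverse {f : ℝ → S} {x y : S} (hf : IsGeodesicSegment f x y) :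
    IsGeodesicSegment (fun s => f (dist x y - s)) y x := by
  obtain ⟨h0, h1, h2⟩ := hf
  refine ⟨by simpa using h1, ?_, ?_⟩
  · rw [dist_comm y x]
    simpa using h0
  · intro a ha b hb
    rw [dist_comm y x] at ha hb
    have ha' : dist x y - a ∈ Set.Icc (0:ℝ) (dist x y) := ⟨by linarith [ha.2], by linarith [ha.1]⟩
    have hb' : dist x y - b ∈ Set.Icc (0:ℝ) (dist x y) := ⟨by linarith [hb.2], by linarith [hb.1]⟩
    rw [h2 _ ha' _ hb']
    rw [show dist x y - a - (dist x y - b) = -(a - b) by ring, abs_neg]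

lemma geo_smul (hiso : IsometricAction G S) (e : G) {f : ℝ → S} {x y : S}
    (hf : IsGeodesicSegment f x y) :
    IsGeodesicSegment (fun s => e • f s) (e • x) (e • y) := by
  obtain ⟨h0, h1, h2⟩ := hf
  refine ⟨by show e • f 0 = e • x; rw [h0], ?_, ?_⟩
  · show e • f (dist (e • x) (e • y)) = e • y
    rw [iso_dist hiso, h1]
  · intro a ha b hb
    rw [iso_dist hiso] at ha hb ⊢
    exact h2 a ha b hb

/-- Any two orbit points of elliptic elements have large Gromov product:
the key consequence of ellipticity. -/
lemma claimC (hiso : IsometricAction G S) (hδ : 0 ≤ δ)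
    (hfp : ∀ w x y z : S, min (GromovProd x z w) (GromovProd z y w) - δ ≤ GromovProd x y w)
    (x : S) {a b : G} (ha : IsEllipticElt S a) (hb : IsEllipticElt S b)
    (hba : IsEllipticElt S (b⁻¹ * a)) :
    min (dist x (a • x)) (dist x (b • x)) / 2 - 3 * δ ≤ GromovProd (a • x) (b • x) x := by
  have fpo : ∀ p q r : S,
      (GromovProd p r x - δ ≤ GromovProd p q x) ∨ (GromovProd r q x - δ ≤ GromovProd p q x) := by
    intro p q r
    rcases le_total (GromovProd p r x) (GromovProd r q x) with hle | hle
    · left; have h := hfp x p q r; rwa [min_eq_left hle] at h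
    · right; have h := hfp x p q r; rwa [min_eq_right hle] at h
  set A := dist x (a • x) with hAdef
  set B := dist x (b • x) with hBdef
  set P := GromovProd (a • x) (b • x) x with hPdef
  have hPexp : dist (a • x) (b • x) = A + B - 2 * P := gp_expand _ _ _
  -- distance identities
  have e1 : dist x ((b⁻¹ * a) • x) = A + B - 2 * P := by
    rw [mul_smul, iso_dist'' hiso, dist_comm (b • x), hPexp]
  have e2 : dist x ((a⁻¹ * b) • x) = A + B - 2 * P := by
    rw [mul_smul, iso_dist'' hiso, hPexp]
  have e3 : dist x (b⁻¹ • x) = B := by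
    rw [iso_dist'' hiso, dist_comm]
  have e4 : dist x (a⁻¹ • x) = A := by
    rw [iso_dist'' hiso, dist_comm]
  have e5 : dist ((b⁻¹ * a) • x) (b⁻¹ • x) = A := by
    rw [mul_smul, iso_dist hiso, dist_comm]
  have e6 : dist ((a⁻¹ * b) • x) (a⁻¹ • x) = B := by
    rw [mul_smul, iso_dist hiso, dist_comm]
  have e7 : (b⁻¹ * a)⁻¹ = a⁻¹ * b := by group
  -- doubled-back inequalities
  have db_h := elliptic_bound hiso hδ hfp hba x
  rw [e7, e1] at db_h
  have db_a := elliptic_bound hiso hδ hfp ha x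
  have db_b := elliptic_bound hiso hδ hfp hb x
  rw [← hAdef] at db_a
  rw [← hBdef] at db_b
  -- Gromov product identities
  have g3 : GromovProd ((b⁻¹ * a) • x) (b⁻¹ • x) x = B - P := by
    unfold GromovProd at hPdef ⊢
    rw [e1, e3, e5]
    rw [hPdef]; ring
  have g4 : GromovProd ((a⁻¹ * b) • x) (a⁻¹ • x) x = A - P := by
    unfold GromovProd at hPdef ⊢
    rw [e2, e4, e6]
    rw [hPdef]; ring
  have g3' : GromovProd (b⁻¹ • x) ((b⁻¹ * a) • x) x = B - P := by rw [gp_comm]; exact g3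
  have c1 : GromovProd (a⁻¹ • x) (b⁻¹ • x) x = GromovProd (b⁻¹ • x) (a⁻¹ • x) x := gp_comm (a⁻¹ • x) (b⁻¹ • x) x
  have c2 : GromovProd (b⁻¹ • x) (b • x) x = GromovProd (b • x) (b⁻¹ • x) x := gp_comm (b⁻¹ • x) (b • x) x
  -- four-point chains
  rcases fpo (b⁻¹ • x) ((a⁻¹ * b) • x) ((b⁻¹ * a) • x) with h5 | h5
  all_goals rcases fpo (b⁻¹ • x) (a⁻¹ • x) ((a⁻¹ * b) • x) with h6 | h6
  all_goals rcases fpo (a • x) (b⁻¹ • x) (a⁻¹ • x) with h8 | h8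
  all_goals rcases fpo (a • x) (b • x) (b⁻¹ • x) with h10 | h10
  all_goals linarith [min_le_left A B, min_le_right A B, g3, g3', g4, c1, c2]

end Tools2

section Tools3

variable {S G : Type*} [MetricSpace S] [Group G] [MulAction G S] {δ : ℝ}

/-- Level (Busemann) quasi-preservation: multiplying a very deep element `b` by `e`
changes the displacement only by `O(δ)`. -/
lemma level_pres (hiso : IsometricAction G S) (hδ : 0 ≤ δ)
    (hfp : ∀ w x y z : S, min (GromovProd x z w) (GromovProd z y w) - δ ≤ GromovProd x y w)
    (x : S) (E : Subgroup G) (hell : ∀ f ∈ E, IsEllipticElt S f)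
    {e b : G} (he : e ∈ E) (hb : b ∈ E) {C : ℝ}
    (hC : ∀ k : ℤ, dist x ((e ^ k) • x) ≤ C)
    (hdeep : C + 2 * dist x (e • x) + 6 * δ ≤ dist x (b • x)) :
    dist x (e • x) / 2 - 4 * δ ≤ GromovProd (e⁻¹ • x) (b • x) x ∧
      GromovProd (e⁻¹ • x) (b • x) x ≤ dist x (e • x) / 2 + δ := by
  have fpo : ∀ p q r : S,
      (GromovProd p r x - δ ≤ GromovProd p q x) ∨ (GromovProd r q x - δ ≤ GromovProd p q x) := by
    intro p q r
    rcases le_total (GromovProd p r x) (GromovProd r q x) with hle | hle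
    · left; have h := hfp x p q r; rwa [min_eq_left hle] at h
    · right; have h := hfp x p q r; rwa [min_eq_right hle] at h
  set A := dist x (e • x) with hAdef
  set B := dist x (b • x) with hBdef
  have hC1 : A ≤ C := by have h := hC 1; rwa [zpow_one] at h
  have hC0 : 0 ≤ C := by have h := hC 0; simpa using h
  have hA0 : 0 ≤ A := dist_nonneg
  have hB0 : 0 ≤ B := dist_nonneg
  have hAB : A ≤ B := by linarith
  have e4 : dist x (e⁻¹ • x) = A := by rw [iso_dist'' hiso, dist_comm]
  -- claim C for the pair (e, b)
  have hCeb := claimC hiso hδ hfp x (hell e he) (hell b hb)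
    (hell _ (E.mul_mem (E.inv_mem hb) he))
  rw [min_eq_left hAB] at hCeb
  -- doubled back for e
  have db_e := elliptic_bound hiso hδ hfp (hell e he) x
  -- lower bound
  have hlow : A / 2 - 4 * δ ≤ GromovProd (e⁻¹ • x) (b • x) x := by
    rcases fpo (e⁻¹ • x) (b • x) (e • x) with h1 | h1
    · have hcm : GromovProd (e⁻¹ • x) (e • x) x = GromovProd (e • x) (e⁻¹ • x) x :=
        gp_comm (e⁻¹ • x) (e • x) x
      linarith
    · linarith
  refine ⟨hlow, ?_⟩
  by_contra hu
  push_neg at hu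
  set β := GromovProd (e⁻¹ • x) (b • x) x with hβdef
  have hβA : β ≤ A := by
    have h := gp_le_left (e⁻¹ • x) (b • x) x
    rw [e4] at h; exact h
  -- the sequence e^n * b
  have hBn_low : ∀ n : ℕ, B - C ≤ dist x ((e ^ n * b) • x) := by
    intro n
    have h1 : dist x (b • x) = dist (e ^ n • x) ((e ^ n * b) • x) := by
      rw [mul_smul, iso_dist hiso]
    have h2 := dist_triangle (e ^ n • x) x ((e ^ n * b) • x)
    have h3 : dist (e ^ n • x) x ≤ C := by
      rw [dist_comm]
      have h := hC (n : ℤ)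
      rwa [zpow_natCast] at h
    linarith [h1, h2, h3]
  have hmemn : ∀ n : ℕ, e ^ n * b ∈ E := fun n => E.mul_mem (pow_mem he n) hb
  -- comparison of β along the sequence
  have hstep : ∀ n : ℕ, β - δ ≤ GromovProd (e⁻¹ • x) ((e ^ n * b) • x) x := by
    intro n
    rcases fpo (e⁻¹ • x) ((e ^ n * b) • x) (b • x) with h1 | h1
    · exact h1
    · -- use claim C for the pair (b, e^n b)
      have hCb := claimC hiso hδ hfp x (hell b hb) (hell _ (hmemn n))
        (hell _ (E.mul_mem (E.inv_mem (hmemn n)) hb))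
      have h2 := hBn_low n
      have h3 : B - C ≤ min (dist x (b • x)) (dist x ((e ^ n * b) • x)) := le_min (by linarith) h2
      have hcm : GromovProd (b • x) ((e ^ n * b) • x) x
          = GromovProd ((e ^ n * b) • x) (b • x) x := gp_comm _ _ _
      linarith
  -- recurrence
  have hrec : ∀ n : ℕ, dist x ((e ^ (n + 1) * b) • x)
      = A + dist x ((e ^ n * b) • x) - 2 * GromovProd (e⁻¹ • x) ((e ^ n * b) • x) x := by
    intro n
    have h1 : e ^ (n + 1) * b = e * (e ^ n * b) := by rw [pow_succ']; group
    have h2 : dist x ((e * (e ^ n * b)) • x) = dist (e⁻¹ • x) ((e ^ n * b) • x) := by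
      rw [mul_smul, iso_dist' hiso]
    have h3 := gp_expand (e⁻¹ • x) ((e ^ n * b) • x) x
    rw [h1, h2, h3, e4]
  have hdec : ∀ n : ℕ, dist x ((e ^ n * b) • x) ≤ B - (n : ℝ) * (2 * β - A - 2 * δ) := by
    intro n
    induction n with
    | zero => simp [hBdef]
    | succ n ih =>
      have h1 := hrec n
      have h2 := hstep n
      push_cast
      linarith
  have hσ : 0 < 2 * β - A - 2 * δ := by linarith
  obtain ⟨n, hn⟩ := exists_nat_gt (C / (2 * β - A - 2 * δ))
  have h4 : C < (n : ℝ) * (2 * β - A - 2 * δ) := by rwa [div_lt_iff₀ hσ] at hn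
  have h5 := hBn_low n
  have h6 := hdec n
  linarith

/-- Distance form of level preservation. -/
lemma level_pres_dist (hiso : IsometricAction G S) (hδ : 0 ≤ δ)
    (hfp : ∀ w x y z : S, min (GromovProd x z w) (GromovProd z y w) - δ ≤ GromovProd x y w)
    (x : S) (E : Subgroup G) (hell : ∀ f ∈ E, IsEllipticElt S f)
    {e b : G} (he : e ∈ E) (hb : b ∈ E) {C : ℝ}
    (hC : ∀ k : ℤ, dist x ((e ^ k) • x) ≤ C)
    (hdeep : C + 2 * dist x (e • x) + 6 * δ ≤ dist x (b • x)) :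
    dist x (b • x) - 2 * δ ≤ dist x ((e * b) • x) ∧
      dist x ((e * b) • x) ≤ dist x (b • x) + 8 * δ := by
  obtain ⟨h1, h2⟩ := level_pres hiso hδ hfp x E hell he hb hC hdeep
  have e4 : dist x (e⁻¹ • x) = dist x (e • x) := by rw [iso_dist'' hiso, dist_comm]
  have h3 : dist x ((e * b) • x) = dist (e⁻¹ • x) (b • x) := by
    rw [mul_smul, iso_dist' hiso]
  have h4 := gp_expand (e⁻¹ • x) (b • x) x
  rw [e4] at h4
  constructor <;> [skip; skip] <;> rw [h3, h4] <;> linarith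

end Tools3

section Tools4

variable {S G : Type*} [MetricSpace S] [Group G] [MulAction G S] {δ : ℝ}

/-- Key fixing lemma: any element `e ∈ E` coarsely fixes every point of a geodesic
to a very deep orbit point, beyond `e`'s own half-displacement. -/
lemma key_fix (hiso : IsometricAction G S) (hδ : 0 ≤ δ) (hhyp : DeltaHyperbolic δ S)
    (hfp : ∀ w x y z : S, min (GromovProd x z w) (GromovProd z y w) - δ ≤ GromovProd x y w)
    (x : S) (E : Subgroup G) (hell : ∀ f ∈ E, IsEllipticElt S f)
    {e b : G} (he : e ∈ E) (hb : b ∈ E) {C : ℝ}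
    (hC : ∀ k : ℤ, dist x ((e ^ k) • x) ≤ C)
    (hdeep : C + 2 * dist x (e • x) + 6 * δ ≤ dist x (b • x))
    {γ : ℝ → S} (hγ : IsGeodesicSegment γ x (b • x))
    {t : ℝ} (ht1 : dist x (e • x) / 2 + 2 * δ ≤ t)
    (ht2 : t ≤ dist x (b • x) / 2 - 9 * δ) :
    dist (γ t) (e • γ t) ≤ 10 * δ := by
  have hC1 : dist x (e • x) ≤ C := by have h := hC 1; rwa [zpow_one] at h
  have hC0 : 0 ≤ C := by have h := hC 0; simpa using h
  have hA0 : 0 ≤ dist x (e • x) := dist_nonneg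
  have hB0 : 0 ≤ dist x (b • x) := dist_nonneg
  have ht0 : 0 ≤ t := by linarith
  obtain ⟨hBc1, hBc2⟩ := level_pres_dist hiso hδ hfp x E hell he hb hC hdeep
  have hpt : e • (b • x) = (e * b) • x := (mul_smul e b x).symm
  obtain ⟨σ, hσ⟩ := hhyp.1 x ((e * b) • x)
  -- first comparison: γ(t) is close to σ(t)
  have hmemc : e * b ∈ E := E.mul_mem he hb
  have hgp1 := claimC hiso hδ hfp x (hell b hb) (hell _ hmemc)
    (hell _ (E.mul_mem (E.inv_mem hmemc) hb))
  have hminB : dist x (b • x) - 2 * δ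
      ≤ min (dist x (b • x)) (dist x ((e * b) • x)) := le_min (by linarith) hBc1
  have ht_le_gp : t ≤ GromovProd (b • x) ((e * b) • x) x := by linarith
  have d1 : dist (γ t) (σ t) ≤ δ :=
    hhyp.2 (b • x) ((e * b) • x) x γ σ hγ hσ t ⟨ht0, ht_le_gp⟩
  -- second comparison via thin triangle at the vertex (e*b)•x
  have hσr := geo_reverse hσ
  have hγe := geo_smul hiso e hγ
  rw [hpt] at hγe
  have hd_e : dist (e • x) ((e * b) • x) = dist x (b • x) := by
    rw [← hpt, iso_dist hiso]
  have hrev2 := geo_reverse hγe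
  rw [hd_e] at hrev2
  have hW : GromovProd x (e • x) ((e * b) • x)
      = (dist x ((e * b) • x) + dist x (b • x) - dist x (e • x)) / 2 := by
    unfold GromovProd
    rw [dist_comm ((e * b) • x) x, dist_comm ((e * b) • x) (e • x), hd_e]
  have hs0 : 0 ≤ dist x (b • x) - t := by linarith
  have hsW : dist x (b • x) - t ≤ GromovProd x (e • x) ((e * b) • x) := by
    rw [hW]; linarith
  have d2 := hhyp.2 x (e • x) ((e * b) • x) _ _ hσr hrev2 (dist x (b • x) - t) ⟨hs0, hsW⟩
  have harg : dist x (b • x) - (dist x (b • x) - t) = t := by ring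
  rw [harg] at d2
  -- d2 : dist (σ (dist x ((e*b)•x) - (dist x (b•x) - t))) (e • γ t) ≤ δ
  have hu0 : 0 ≤ dist x ((e * b) • x) - (dist x (b • x) - t) := by linarith
  have huBc : dist x ((e * b) • x) - (dist x (b • x) - t) ≤ dist x ((e * b) • x) := by linarith
  have htBc : t ≤ dist x ((e * b) • x) := by linarith
  have d3 : dist (σ t) (σ (dist x ((e * b) • x) - (dist x (b • x) - t))) ≤ 8 * δ := by
    rw [hσ.2.2 t ⟨ht0, htBc⟩ _ ⟨hu0, huBc⟩]
    rw [abs_le]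
    constructor <;> linarith
  calc dist (γ t) (e • γ t)
      ≤ dist (γ t) (σ t) + dist (σ t) (σ (dist x ((e * b) • x) - (dist x (b • x) - t)))
        + dist (σ (dist x ((e * b) • x) - (dist x (b • x) - t))) (e • γ t) :=
        dist_triangle4 _ _ _ _
    _ ≤ δ + 8 * δ + δ := by linarith
    _ ≤ 10 * δ := by linarith

end Tools4

/-- If `G` acts acylindrically on a hyperbolic space `S` and `E ≤ G` is an
infinite subgroup all of whose elements act elliptically, then every element of the
normalizer `N_G(E)` acts elliptically. -/
theorem normalizer_elliptic {S G : Type*} [MetricSpace S] [Group G] [MulAction G S]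
    (δ : ℝ) (hδ : 0 ≤ δ) (hhyp : DeltaHyperbolic δ S) (hiso : IsometricAction G S)
    (hacyl : AcylindricalAction G S) (E : Subgroup G)
    (hinf : (E : Set G).Infinite) (hell : ∀ g ∈ E, IsEllipticElt S g) :
    ∀ g ∈ Subgroup.normalizer (E : Set G), IsEllipticElt S g := by
  have hfp := four_point hhyp
  intro g hg
  by_contra hng
  simp only [IsEllipticElt, not_forall] at hng
  obtain ⟨x, hx⟩ := hng
  by_cases hub : Bornology.IsBounded ((fun h : G => h • x) '' (E : Set G))
  · -- Case 1: the orbit of E is bounded; use acylindricity along the g-orbit.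
    obtain ⟨Cb, hCb⟩ := Metric.isBounded_iff.mp hub
    have hxorb : x ∈ (fun h : G => h • x) '' (E : Set G) := ⟨1, E.one_mem, one_smul G x⟩
    have hCb0 : (0:ℝ) ≤ Cb := by have h := hCb hxorb hxorb; simpa using h
    obtain ⟨R, N, hR, hRN⟩ := hacyl (Cb + 1) (by linarith)
    have hfar : ∃ n : ℤ, R ≤ dist x ((g ^ n) • x) := by
      by_contra hcon
      push_neg at hcon
      apply hx
      apply (Metric.isBounded_closedBall (x := x) (r := R)).subset
      rintro _ ⟨n, rfl⟩
      simp only [Metric.mem_closedBall]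
      rw [dist_comm]
      exact (hcon n).le
    obtain ⟨n, hn⟩ := hfar
    have happ := hRN x ((g ^ n) • x) hn
    have hgnE : (g ^ n)⁻¹ ∈ Subgroup.normalizer (E : Set G) :=
        (Subgroup.normalizer (E : Set G)).inv_mem ((Subgroup.normalizer (E : Set G)).zpow_mem hg n)
    have hsub : (E : Set G) ⊆ {h : G | dist x (h • x) ≤ Cb + 1 ∧
        dist ((g ^ n) • x) (h • ((g ^ n) • x)) ≤ Cb + 1} := by
      intro f hf
      have hf' : (g ^ n)⁻¹ * f * g ^ n ∈ E := by
        have h := (Subgroup.mem_normalizer_iff.mp hgnE f).mp hf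
        rwa [inv_inv] at h
      constructor
      · have h := hCb hxorb ⟨f, hf, rfl⟩
        simp only at h ⊢
        linarith
      · have heq : ((g ^ n)⁻¹ * f * g ^ n) • x = (g ^ n)⁻¹ • (f • ((g ^ n) • x)) := by
          rw [mul_smul, mul_smul]
        have h2 : dist ((g ^ n) • x) (f • ((g ^ n) • x))
            = dist x (((g ^ n)⁻¹ * f * g ^ n) • x) := by
          rw [← iso_dist hiso ((g ^ n)⁻¹) ((g ^ n) • x) (f • ((g ^ n) • x)),
            inv_smul_smul, heq]
        have h3 := hCb hxorb ⟨(g ^ n)⁻¹ * f * g ^ n, hf', rfl⟩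
        simp only at h2 h3 ⊢
        rw [h2]
        linarith
    exact (happ.1).not_infinite (hinf.mono hsub)
  · -- Case 2: the orbit of E is unbounded; contradiction with acylindricity.
    exfalso
    have hfarE : ∀ D : ℝ, ∃ b ∈ E, D ≤ dist x (b • x) := by
      intro D
      by_contra hcon
      push_neg at hcon
      apply hub
      apply (Metric.isBounded_closedBall (x := x) (r := D)).subset
      rintro _ ⟨f, hf, rfl⟩
      simp only [Metric.mem_closedBall]
      rw [dist_comm]
      exact (hcon f hf).le
    have hCBex : ∀ f : G, ∃ Cf : ℝ, f ∈ E → ∀ k : ℤ, dist x ((f ^ k) • x) ≤ Cf := by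
      intro f
      by_cases hf : f ∈ E
      · obtain ⟨Cf, hCf⟩ := Metric.isBounded_iff.mp (hell f hf x)
        refine ⟨Cf, fun _ k => ?_⟩
        have h0 : x ∈ Set.range fun m : ℤ => (f ^ m) • x := ⟨0, by simp⟩
        exact hCf h0 ⟨k, rfl⟩
      · exact ⟨0, fun h => absurd h hf⟩
    choose CB hCB using hCBex
    obtain ⟨R, N, hR, hRN⟩ := hacyl (10 * δ + 1) (by linarith)
    obtain ⟨t, htE, htcard⟩ := hinf.exists_subset_card_eq (N + 1)
    have htne : t.Nonempty := Finset.card_pos.mp (by rw [htcard]; exact Nat.succ_pos N)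
    set S1 := t.sup' htne fun f => dist x (f • x) with hS1
    have hS1nn : (0:ℝ) ≤ S1 := by
      obtain ⟨f0, hf0⟩ := htne
      rw [hS1]
      exact le_trans dist_nonneg (Finset.le_sup' (f := fun f => dist x (f • x)) hf0)
    set T1 := S1 / 2 + 2 * δ with hT1def
    clear_value T1
    clear_value S1
    obtain ⟨b, hbE, hbB⟩ := hfarE
      (max (t.sup' htne fun f => CB f + 2 * dist x (f • x) + 6 * δ) (2 * T1 + 2 * R + 18 * δ))
    have hB2 : 2 * T1 + 2 * R + 18 * δ ≤ dist x (b • x) := le_trans (le_max_right _ _) hbB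
    have hB0 : (0:ℝ) ≤ dist x (b • x) := dist_nonneg
    obtain ⟨γ, hγ⟩ := hhyp.1 x (b • x)
    have hT10 : 0 ≤ T1 := by rw [hT1def]; linarith
    have hB2' : 2 * T1 + 2 * R + 18 * δ ≤ dist x (b • x) := hB2
    have hT2B : T1 + R ≤ dist x (b • x) / 2 - 9 * δ := by linarith [hB2', hδ, hR]
    have hT1mem : T1 ∈ Set.Icc (0:ℝ) (dist x (b • x)) := ⟨hT10, by linarith⟩
    have hT2mem : T1 + R ∈ Set.Icc (0:ℝ) (dist x (b • x)) := ⟨by linarith, by linarith⟩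
    have hpq : dist (γ T1) (γ (T1 + R)) = R := by
      rw [hγ.2.2 T1 hT1mem (T1 + R) hT2mem,
        show T1 - (T1 + R) = -R by ring, abs_neg, abs_of_pos hR]
    have happ := hRN (γ T1) (γ (T1 + R)) (by rw [hpq])
    have hsub : ↑t ⊆ {h : G | dist (γ T1) (h • γ T1) ≤ 10 * δ + 1 ∧
        dist (γ (T1 + R)) (h • γ (T1 + R)) ≤ 10 * δ + 1} := by
      intro f hf
      have hfE : f ∈ E := htE hf
      have hdeep : CB f + 2 * dist x (f • x) + 6 * δ ≤ dist x (b • x) :=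
        le_trans (le_trans (Finset.le_sup' (f := fun f => CB f + 2 * dist x (f • x) + 6 * δ) hf) (le_max_left _ _)) hbB
      have hfd : dist x (f • x) ≤ S1 := by
        rw [hS1]; exact Finset.le_sup' (f := fun f => dist x (f • x)) hf
      constructor
      · have h := key_fix hiso hδ hhyp hfp x E hell hfE hbE (hCB f hfE) hdeep hγ
          (t := T1) (by rw [hT1def]; linarith) (by linarith)
        linarith
      · have h := key_fix hiso hδ hhyp hfp x E hell hfE hbE (hCB f hfE) hdeep hγ
          (t := T1 + R) (by rw [hT1def]; linarith) (by linarith)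
        linarith
    have hcard : N + 1 ≤ N := by
      calc N + 1 = t.card := htcard.symm
        _ = (↑t : Set G).ncard := (Set.ncard_coe_finset t).symm
        _ ≤ ({h : G | dist (γ T1) (h • γ T1) ≤ 10 * δ + 1 ∧
            dist (γ (T1 + R)) (h • γ (T1 + R)) ≤ 10 * δ + 1}).ncard :=
          Set.ncard_le_ncard hsub happ.1
        _ ≤ N := happ.2
    omega
end

section
/- Let g be a loxodromic isometry of a δ-hyperbolic geodesic space on which some group containing g acts acylindrically, and suppose the translation length satisfies [g] > M where M = M(δ,1,2,ε+δ) is the local-to-global quasigeodesic constant. Then every ε-line L(s,g) of g is an M-local (1, ε+δ)-quasi-geodesic, and hence a global (2, ε+δ)-quasi-geodesic. -/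
/-- The translation length `[g] = inf_{s ∈ S} d(s, g s)`. -/
noncomputable def translationLength {G : Type*} (S : Type*) [Group G] [MulAction G S]
    [MetricSpace S] (g : G) : ℝ :=
  ⨅ s : S, dist s (g • s)

/-- A (unit-speed parametrized) global `(κ, l)`-quasi-geodesic line. -/
def QuasiGeodesicMap {S : Type*} [MetricSpace S] (κ l : ℝ) (c : ℝ → S) : Prop :=
  ∀ a b : ℝ, |a - b| / κ - l ≤ dist (c a) (c b) ∧ dist (c a) (c b) ≤ κ * |a - b| + l

/-- An `M`-local `(κ, l)`-quasi-geodesic line. -/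
def LocalQuasiGeodesicMap {S : Type*} [MetricSpace S] (M κ l : ℝ) (c : ℝ → S) : Prop :=
  ∀ a b : ℝ, |a - b| ≤ M →
    |a - b| / κ - l ≤ dist (c a) (c b) ∧ dist (c a) (c b) ≤ κ * |a - b| + l

/-- `c` is an `ε`-line `L(s,g)` of `g`: the bi-infinite concatenation of the translates
`gⁱ·[s, gs]` of a geodesic from `s` to `g s`, where `d(s, gs) ≤ [g] + ε`. -/
def IsEpsLine {G S : Type*} [Group G] [MulAction G S] [MetricSpace S]
    (ε : ℝ) (g : G) (s : S) (c : ℝ → S) : Prop :=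
  dist s (g • s) ≤ translationLength S g + ε ∧ c 0 = s ∧
    (∀ t : ℝ, c (t + dist s (g • s)) = g • c t) ∧
    ∀ a ∈ Set.Icc (0:ℝ) (dist s (g • s)), ∀ b ∈ Set.Icc (0:ℝ) (dist s (g • s)),
      dist (c a) (c b) = |a - b|

/-- Let `g` be loxodromic for an acylindrical isometric action on a
`δ`-hyperbolic geodesic space, `ε ≥ 0`, and let `M = M(δ,1,2,ε+δ)` be a local-to-global
constant. If `[g] > M`, then every `ε`-line of `g` is an `M`-local `(1, ε+δ)`-quasi-geodesic,
and hence a global `(2, ε+δ)`-quasi-geodesic. -/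
theorem epsLine_local_and_global_quasigeodesic {S G : Type*} [MetricSpace S] [Group G]
    [MulAction G S] (δ : ℝ) (hδ : 0 ≤ δ) (hhyp : DeltaHyperbolic δ S)
    (hiso : IsometricAction G S) (hacyl : AcylindricalAction G S)
    (g : G) (hg : IsLoxodromicElt S g) (ε : ℝ) (hε : 0 ≤ ε) (M : ℝ) (hM : 0 < M)
    (hltg : ∀ c : ℝ → S, LocalQuasiGeodesicMap M 1 (ε + δ) c →
      QuasiGeodesicMap 2 (ε + δ) c)
    (hlen : M < translationLength S g) :
    ∀ (s : S) (c : ℝ → S), IsEpsLine ε g s c →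
      LocalQuasiGeodesicMap M 1 (ε + δ) c ∧ QuasiGeodesicMap 2 (ε + δ) c := by
  intro s c hcl
  obtain ⟨hDle, hc0, hper, hgeo⟩ := hcl
  set D := dist s (g • s) with hDdef
  have htl_le : ∀ p : S, translationLength S g ≤ dist p (g • p) := fun p =>
    ciInf_le ⟨0, by rintro x ⟨p, rfl⟩; exact dist_nonneg⟩ p
  have hMD : M < D := lt_of_lt_of_le hlen (htl_le s)
  have hD0 : 0 < D := hM.trans hMD
  have hdist : ∀ (h : G) (x y : S), dist (h • x) (h • y) = dist x y := fun h x y =>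
    (hiso h).dist_eq x y
  -- periodicity over ℕ
  have hpn : ∀ (n : ℕ) (t : ℝ), c (t + n * D) = (g ^ n) • c t := by
    intro n
    induction n with
    | zero => intro t; simp
    | succ m ih =>
      intro t
      have h1 : t + (m + 1 : ℕ) * D = (t + m * D) + D := by push_cast; ring
      rw [h1, hper, ih, smul_smul, pow_succ']
  have hpn' : ∀ (n : ℕ) (t : ℝ), c (t - n * D) = (g ^ n)⁻¹ • c t := by
    intro n
    induction n with
    | zero => intro t; simp
    | succ m ih =>
      intro t
      have h1 := hper (t - (m + 1 : ℕ) * D)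
      have h2 : t - (m + 1 : ℕ) * D + D = t - m * D := by push_cast; ring
      rw [h2, ih] at h1
      have h3 : c (t - (m + 1 : ℕ) * D) = g⁻¹ • ((g ^ m)⁻¹ • c t) := by
        rw [h1, inv_smul_smul]
      rw [h3, smul_smul, ← mul_inv_rev, ← pow_succ]
  have hper' : ∀ (n : ℤ) (t : ℝ), c (t + n * D) = (g ^ n) • c t := by
    intro n t
    obtain ⟨m, rfl | rfl⟩ := Int.eq_nat_or_neg n
    · rw [zpow_natCast]
      have he : t + (((m:ℤ)):ℝ) * D = t + (m:ℝ) * D := by push_cast; ring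
      rw [he]
      exact hpn m t
    · rw [zpow_neg, zpow_natCast]
      have he : t + ((-(m:ℤ) : ℤ):ℝ) * D = t - (m:ℝ) * D := by push_cast; ring
      rw [he]
      exact hpn' m t
  -- c is isometric on each period
  have hsegk : ∀ (k : ℤ) (u w : ℝ), (k:ℝ)*D ≤ u → u ≤ ((k:ℝ)+1)*D →
      (k:ℝ)*D ≤ w → w ≤ ((k:ℝ)+1)*D → dist (c u) (c w) = |u - w| := by
    intro k u w h1 h2 h3 h4
    have hkD : ((k:ℝ)+1)*D = (k:ℝ)*D + D := by ring
    have hu : c u = (g ^ k) • c (u - (k:ℝ)*D) := by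
      have h := hper' k (u - (k:ℝ)*D)
      have he : u - (k:ℝ)*D + (k:ℝ)*D = u := by ring
      rw [he] at h; exact h
    have hw : c w = (g ^ k) • c (w - (k:ℝ)*D) := by
      have h := hper' k (w - (k:ℝ)*D)
      have he : w - (k:ℝ)*D + (k:ℝ)*D = w := by ring
      rw [he] at h; exact h
    rw [hu, hw, hdist, hgeo _ ⟨by linarith, by linarith⟩ _ ⟨by linarith, by linarith⟩]
    congr 1; ring
  -- the key breakpoint estimate
  have key : ∀ (k : ℤ) (a b : ℝ), ((k:ℝ)-1)*D ≤ a → a ≤ (k:ℝ)*D → (k:ℝ)*D ≤ b →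
      b ≤ ((k:ℝ)+1)*D → b - a ≤ M →
      (b - a) - (ε+δ) ≤ dist (c a) (c b) ∧ dist (c a) (c b) ≤ b - a := by
    intro k a b h1 h2 h3 h4 h5
    have hkD : ((k:ℝ)+1)*D = (k:ℝ)*D + D := by ring
    have hkD' : ((k:ℝ)-1)*D = (k:ℝ)*D - D := by ring
    set v := c ((k:ℝ)*D) with hv
    have hcast : ((k - 1 : ℤ):ℝ) = (k:ℝ) - 1 := by push_cast; ring
    have hda : dist v (c a) = (k:ℝ)*D - a := by
      have h := hsegk (k-1) ((k:ℝ)*D) a (by rw [hcast]; linarith) (by rw [hcast]; linarith)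
        (by rw [hcast]; linarith) (by rw [hcast]; linarith)
      rw [h, abs_of_nonneg (by linarith)]
    have hdb : dist v (c b) = b - (k:ℝ)*D := by
      have h := hsegk k ((k:ℝ)*D) b (le_refl _) (by linarith) h3 h4
      rw [h, abs_sub_comm, abs_of_nonneg (by linarith)]
    -- geodesics from v to c a and from v to c b
    have hf : IsGeodesicSegment (fun t => c ((k:ℝ)*D - t)) v (c a) := by
      refine ⟨by simp [hv], ?_, ?_⟩
      · rw [hda]
        show c ((k:ℝ)*D - ((k:ℝ)*D - a)) = c a
        congr 1; ring
      · intro t ht t' ht'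
        rw [hda] at ht ht'
        obtain ⟨ht1, ht2⟩ := ht; obtain ⟨ht1', ht2'⟩ := ht'
        have h := hsegk (k-1) ((k:ℝ)*D - t) ((k:ℝ)*D - t') (by rw [hcast]; linarith)
          (by rw [hcast]; linarith) (by rw [hcast]; linarith) (by rw [hcast]; linarith)
        rw [h]
        rw [show (k:ℝ)*D - t - ((k:ℝ)*D - t') = -(t - t') by ring, abs_neg]
    have hh : IsGeodesicSegment (fun t => c ((k:ℝ)*D + t)) v (c b) := by
      refine ⟨by simp [hv], ?_, ?_⟩
      · rw [hdb]
        show c ((k:ℝ)*D + (b - (k:ℝ)*D)) = c b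
        congr 1; ring
      · intro t ht t' ht'
        rw [hdb] at ht ht'
        obtain ⟨ht1, ht2⟩ := ht; obtain ⟨ht1', ht2'⟩ := ht'
        have h := hsegk k ((k:ℝ)*D + t) ((k:ℝ)*D + t') (by linarith) (by linarith)
          (by linarith) (by linarith)
        rw [h]
        congr 1; ring
    set ρ := GromovProd (c a) (c b) v with hρ
    have hρdef : ρ = (((k:ℝ)*D - a) + (b - (k:ℝ)*D) - dist (c a) (c b))/2 := by
      rw [hρ]; unfold GromovProd; rw [hda, hdb]
    have t1 : dist (c a) (c b) ≤ dist v (c a) + dist v (c b) := by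
      rw [dist_comm v (c a)]; exact dist_triangle _ _ _
    have t2 : dist v (c b) ≤ dist v (c a) + dist (c a) (c b) := dist_triangle _ _ _
    have t3 : dist v (c a) ≤ dist v (c b) + dist (c a) (c b) := by
      rw [dist_comm (c a) (c b)]; exact dist_triangle _ _ _
    rw [hda, hdb] at t1 t2 t3
    have hρ0 : 0 ≤ ρ := by rw [hρdef]; linarith
    have hρα : ρ ≤ (k:ℝ)*D - a := by rw [hρdef]; linarith
    have hρβ : ρ ≤ b - (k:ℝ)*D := by rw [hρdef]; linarith
    have h2ρ : 2*ρ ≤ M := by linarith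
    have hthin := hhyp.2 (c a) (c b) v _ _ hf hh ρ ⟨hρ0, le_refl ρ⟩
    -- hthin : dist (c (kD - ρ)) (c (kD + ρ)) ≤ δ
    have hgp : c ((k:ℝ)*D - ρ + D) = g • c ((k:ℝ)*D - ρ) := hper _
    have hd2 : dist (c ((k:ℝ)*D + ρ)) (c ((k:ℝ)*D - ρ + D)) = D - 2*ρ := by
      have h := hsegk k ((k:ℝ)*D + ρ) ((k:ℝ)*D - ρ + D) (by linarith) (by linarith)
        (by linarith) (by linarith)
      rw [h, show (k:ℝ)*D + ρ - ((k:ℝ)*D - ρ + D) = -(D - 2*ρ) by ring, abs_neg,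
        abs_of_nonneg (by linarith)]
    have htr : translationLength S g ≤ dist (c ((k:ℝ)*D - ρ)) (g • c ((k:ℝ)*D - ρ)) :=
      htl_le _
    rw [← hgp] at htr
    have hsum : dist (c ((k:ℝ)*D - ρ)) (c ((k:ℝ)*D - ρ + D)) ≤
        dist (c ((k:ℝ)*D - ρ)) (c ((k:ℝ)*D + ρ)) + dist (c ((k:ℝ)*D + ρ)) (c ((k:ℝ)*D - ρ + D)) :=
      dist_triangle _ _ _
    have hfin : 2*ρ ≤ ε + δ := by
      have := hDle
      rw [hd2] at hsum
      linarith
    refine ⟨by rw [hρdef] at hfin; linarith, by linarith⟩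
  -- assemble the local quasigeodesic property
  have main : ∀ a b : ℝ, a ≤ b → b - a ≤ M →
      (b - a) - (ε+δ) ≤ dist (c a) (c b) ∧ dist (c a) (c b) ≤ b - a := by
    intro a b hab habM
    set k : ℤ := ⌈a / D⌉ with hk
    have hak : a ≤ (k:ℝ) * D := by
      have h := Int.le_ceil (a / D)
      exact (div_le_iff₀ hD0).1 h
    have hka : ((k:ℝ) - 1) * D ≤ a := by
      have h := Int.ceil_lt_add_one (a / D)
      have h2 : (k:ℝ) - 1 < a / D := by rw [hk]; push_cast at h ⊢; linarith
      exact le_of_lt ((lt_div_iff₀ hD0).1 h2)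
    by_cases hbk : b ≤ (k:ℝ) * D
    · have hcast : ((k - 1 : ℤ):ℝ) = (k:ℝ) - 1 := by push_cast; ring
      have hkD' : ((k:ℝ)-1+1)*D = (k:ℝ)*D := by ring
      have h := hsegk (k-1) a b (by rw [hcast]; linarith) (by rw [hcast, hkD']; linarith)
        (by rw [hcast]; linarith) (by rw [hcast, hkD']; linarith)
      rw [h, abs_sub_comm, abs_of_nonneg (by linarith)]
      constructor <;> linarith
    · push_neg at hbk
      have hbk2 : b ≤ ((k:ℝ)+1)*D := by nlinarith
      exact key k a b hka hak (le_of_lt hbk) hbk2 habM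
  have hloc : LocalQuasiGeodesicMap M 1 (ε + δ) c := by
    intro a b habM
    rcases le_total a b with h | h
    · have habs : |a - b| = b - a := by rw [abs_sub_comm, abs_of_nonneg (by linarith)]
      rw [habs] at habM ⊢
      obtain ⟨h1, h2⟩ := main a b h habM
      constructor
      · calc (b - a) / 1 - (ε + δ) = (b - a) - (ε + δ) := by ring
          _ ≤ dist (c a) (c b) := h1
      · calc dist (c a) (c b) ≤ b - a := h2
          _ ≤ 1 * (b - a) + (ε + δ) := by linarith
    · have habs : |a - b| = a - b := abs_of_nonneg (by linarith)
      rw [habs] at habM ⊢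
      obtain ⟨h1, h2⟩ := main b a h habM
      rw [dist_comm (c a) (c b)]
      constructor
      · calc (a - b) / 1 - (ε + δ) = (a - b) - (ε + δ) := by ring
          _ ≤ dist (c b) (c a) := h1
      · calc dist (c b) (c a) ≤ a - b := h2
          _ ≤ 1 * (a - b) + (ε + δ) := by linarith
  exact ⟨hloc, hltg c hloc⟩
end
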